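/- arXiv:1510.07096 — 9 statements merged into one kernel-verified Lean document; each statement's English description precedes it below -/
import Mathlib

section
/- For every integer n ≥ 2, the maximum running time of the K_3-bootstrap percolation process satisfies M_3(n) = ⌈log₂(n − 1)⌉. -/
/-- One step of the `K_r`-bootstrap percolation process: we add every edge `uv` for which
there is an `r`-element vertex set `S` containing `u` and `v` such that every edge within `S`
other than `uv` is already present. -/
def bootStep {V : Type*} (r : ℕ) (G : SimpleGraph V) : SimpleGraph V where
  Adj u v := G.Adj u v ∨ (u ≠ v ∧ ∃ S : Finset V, S.card = r ∧ u ∈ S ∧ v ∈ S ∧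
    ∀ x ∈ S, ∀ y ∈ S, x ≠ y → ¬((x = u ∧ y = v) ∨ (x = v ∧ y = u)) → G.Adj x y)
  symm := by
    constructor
    intro a b h
    rcases h with h | ⟨hne, S, hS, ha, hb, hall⟩
    · exact Or.inl h.symm
    · refine Or.inr ⟨hne.symm, S, hS, hb, ha, ?_⟩
      intro x hx y hy hxy hno
      exact hall x hx y hy hxy (by tauto)
  loopless := by
    constructor
    intro a h
    rcases h with h | ⟨hne, _⟩
    · exact G.irrefl h
    · exact hne rfl

/-- The maximum running time `M_r(n)`: the largest `t` such that some initially infected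
graph `G` on `n` vertices satisfies `G_t ≠ G_{t-1}` in the `K_r`-bootstrap process. -/
noncomputable def maxRunTime (r n : ℕ) : ℕ :=
  sSup {t | ∃ G : SimpleGraph (Fin n), (bootStep r)^[t] G ≠ (bootStep r)^[t - 1] G}


/-!
In the `K_3`-process an edge `uv` is added as soon as `u` and `v` have a common neighbour, so
by induction `uv` is present at time `t` exactly when `dist_G(u, v) ≤ 2^t`: a walk of length
at most `2^(t+1)` splits at its midpoint into two walks of length at most `2^t`. Distances in an
`n`-vertex graph are at most `n - 1`, so nothing changes after time `⌈log₂ (n - 1)⌉`, while the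
endpoints of the path on `n` vertices are joined exactly at that time.
-/

namespace SimpleGraph

variable {V : Type*} {G : SimpleGraph V} {u v : V}

lemma edist_le_add_iff {a b : ℕ} :
    G.edist u v ≤ a + b ↔ ∃ w, G.edist u w ≤ a ∧ G.edist w v ≤ b := by
  constructor
  · intro h
    have hreach : G.Reachable u v := reachable_of_edist_ne_top (ne_top_of_le_ne_top (by simp) h)
    obtain ⟨p, hp⟩ := hreach.exists_walk_length_eq_edist
    rw [← hp] at h
    refine ⟨p.getVert a, (edist_le (p.take a)).trans ?_, (edist_le (p.drop a)).trans ?_⟩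
    · simp
    · norm_cast at h ⊢
      simp only [Walk.drop_length]
      omega
  · rintro ⟨w, huw, hwv⟩
    exact G.edist_triangle.trans (add_le_add huw hwv)

lemma Reachable.edist_le_card_sub_one [Fintype V] (h : G.Reachable u v) :
    G.edist u v ≤ (Fintype.card V - 1 : ℕ) := by
  obtain ⟨p, hp, hlen⟩ := h.exists_path_of_dist
  rw [← h.coe_dist_eq_edist, ← hlen]
  have := hp.length_lt
  exact_mod_cast (by omega : p.length ≤ Fintype.card V - 1)

lemma pathGraph_val_le_add_length {n : ℕ} {i j : Fin n} (p : (pathGraph n).Walk i j) :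
    j.val ≤ i.val + p.length := by
  induction p with
  | nil => simp
  | cons h _ ih =>
    rw [pathGraph_adj] at h
    simp only [Walk.length_cons]
    omega

lemma pathGraph_edist_zero_last (n : ℕ) : (pathGraph (n + 1)).edist 0 (Fin.last n) = n := by
  have hreach := (pathGraph_connected n).preconnected 0 (Fin.last n)
  refine le_antisymm (by simpa using hreach.edist_le_card_sub_one) ?_
  obtain ⟨p, hp⟩ := hreach.exists_walk_length_eq_edist
  rw [← hp]
  exact_mod_cast (by simpa using pathGraph_val_le_add_length p)

end SimpleGraph

open SimpleGraph

section KThree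

variable {V : Type*} {G : SimpleGraph V} {u v : V}

lemma bootStep_three_adj :
    (bootStep 3 G).Adj u v ↔ G.Adj u v ∨ (u ≠ v ∧ ∃ w, G.Adj u w ∧ G.Adj w v) := by
  classical
  constructor
  · rintro (h | ⟨hne, S, hS, hu, hv, hall⟩)
    · exact Or.inl h
    have hcard : ({u, v} : Finset V).card < S.card := by
      have := Finset.card_le_two (a := u) (b := v)
      omega
    obtain ⟨w, hw, hwuv⟩ := Finset.exists_mem_notMem_of_card_lt_card hcard
    simp only [Finset.mem_insert, Finset.mem_singleton, not_or] at hwuv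
    exact Or.inr ⟨hne, w, hall u hu w hw (Ne.symm hwuv.1) (by tauto),
      hall w hw v hv hwuv.2 (by tauto)⟩
  · rintro (h | ⟨hne, w, huw, hwv⟩)
    · exact Or.inl h
    refine Or.inr ⟨hne, {u, v, w}, ?_, by simp, by simp, ?_⟩
    · rw [Finset.card_insert_of_notMem (by simp [hne, huw.ne]),
        Finset.card_pair hwv.ne.symm]
    · intro x hx y hy hxy hxy_ne_uv
      simp only [Finset.mem_insert, Finset.mem_singleton] at hx hy
      rcases hx with rfl | rfl | rfl <;> rcases hy with rfl | rfl | rfl <;>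
        simp_all [adj_comm]

theorem iterate_bootStep_three_adj (t : ℕ) :
    ((bootStep 3)^[t] G).Adj u v ↔ u ≠ v ∧ G.edist u v ≤ 2 ^ t := by
  induction t generalizing u v with
  | zero =>
    rw [Function.iterate_zero_apply, pow_zero, edist_le_one_iff_adj_or_eq]
    exact ⟨fun h => ⟨h.ne, Or.inl h⟩, fun ⟨hne, h⟩ => h.resolve_right hne⟩
  | succ t ih =>
    have hpow : (2 : ℕ∞) ^ (t + 1) = ((2 ^ t : ℕ) : ℕ∞) + ((2 ^ t : ℕ) : ℕ∞) := by
      push_cast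
      ring
    rw [Function.iterate_succ_apply', bootStep_three_adj, hpow, edist_le_add_iff]
    simp only [ih, Nat.cast_pow, Nat.cast_ofNat]
    constructor
    · rintro (⟨hne, h⟩ | ⟨hne, w, ⟨-, huw⟩, -, hwv⟩)
      · exact ⟨hne, v, h, by simp⟩
      · exact ⟨hne, w, huw, hwv⟩
    · rintro ⟨hne, w, huw, hwv⟩
      by_cases hwu : w = u
      · subst hwu
        exact Or.inl ⟨hne, hwv⟩
      by_cases hwv' : w = v
      · subst hwv'
        exact Or.inl ⟨hne, huw⟩
      exact Or.inr ⟨hne, w, ⟨Ne.symm hwu, huw⟩, hwv', hwv⟩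

lemma iterate_bootStep_three_succ_eq [Fintype V] {t : ℕ} (h : Fintype.card V - 1 ≤ 2 ^ t) :
    (bootStep 3)^[t + 1] G = (bootStep 3)^[t] G := by
  ext u v
  simp only [iterate_bootStep_three_adj, and_congr_right_iff]
  intro _
  refine ⟨fun hle => ?_, fun hle => hle.trans (pow_le_pow_right₀ one_le_two t.le_succ)⟩
  have hreach := reachable_of_edist_ne_top (ne_top_of_le_ne_top (by simp) hle)
  exact hreach.edist_le_card_sub_one.trans (by exact_mod_cast h)

lemma le_clog_of_iterate_bootStep_three_ne [Fintype V] {t : ℕ}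
    (h : (bootStep 3)^[t] G ≠ (bootStep 3)^[t - 1] G) :
    t ≤ Nat.clog 2 (Fintype.card V - 1) := by
  obtain _ | s := t
  · exact absurd rfl h
  by_contra! hlt
  have hle : Fintype.card V - 1 ≤ 2 ^ s :=
    (Nat.clog_le_iff_le_pow one_lt_two).mp (Nat.le_of_lt_succ hlt)
  exact h (iterate_bootStep_three_succ_eq hle)

lemma iterate_bootStep_three_pathGraph_succ_ne {n t : ℕ} (hlt : 2 ^ t < n) (hle : n ≤ 2 ^ (t + 1)) :
    (bootStep 3)^[t + 1] (pathGraph (n + 1)) ≠ (bootStep 3)^[t] (pathGraph (n + 1)) := by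
  intro heq
  have hne : (0 : Fin (n + 1)) ≠ Fin.last n := by
    rw [Ne, Fin.ext_iff, Fin.val_zero, Fin.val_last]
    omega
  have hadj : ((bootStep 3)^[t + 1] (pathGraph (n + 1))).Adj 0 (Fin.last n) := by
    rw [iterate_bootStep_three_adj, pathGraph_edist_zero_last]
    exact ⟨hne, by exact_mod_cast hle⟩
  rw [heq, iterate_bootStep_three_adj, pathGraph_edist_zero_last] at hadj
  exact absurd hadj.2 (by exact_mod_cast hlt.not_ge)

end KThree

theorem maxRunTime_K3_general (n : ℕ) : maxRunTime 3 n = Nat.clog 2 (n - 1) := by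
  have hbound : Nat.clog 2 (n - 1) ∈ upperBounds
      {t | ∃ G : SimpleGraph (Fin n), (bootStep 3)^[t] G ≠ (bootStep 3)^[t - 1] G} :=
    fun t ⟨_, hG⟩ => by simpa using le_clog_of_iterate_bootStep_three_ne hG
  refine le_antisymm (csSup_le' hbound) ?_
  cases hclog : Nat.clog 2 (n - 1) with
  | zero => exact Nat.zero_le _
  | succ s =>
    have hlt : 2 ^ s < n - 1 := not_le.mp ((Nat.clog_le_iff_le_pow one_lt_two).not.mp (by omega))
    have hle : n - 1 ≤ 2 ^ (s + 1) := (Nat.clog_le_iff_le_pow one_lt_two).mp hclog.le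
    obtain ⟨m, rfl⟩ : ∃ m, n = m + 1 := ⟨n - 1, by omega⟩
    rw [hclog] at hbound
    exact le_csSup ⟨_, hbound⟩
      ⟨pathGraph (m + 1), by simpa using iterate_bootStep_three_pathGraph_succ_ne hlt hle⟩

/-- For every integer `n ≥ 2`, the maximum running time of the `K_3`-bootstrap percolation
process is `⌈log₂ (n-1)⌉` (here `Nat.clog 2` is the ceiling of the base-2 logarithm). -/
theorem maxRunTime_K3 (n : ℕ) (hn : 2 ≤ n) : maxRunTime 3 n = Nat.clog 2 (n - 1) :=
  maxRunTime_K3_general n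
end

section
/- For every integer n ≥ 3, the maximum running time of the K_4-bootstrap percolation process satisfies M_4(n) ≥ n − 3; moreover for every n ≥ 4 there is a graph G on n vertices such that the K_4-bootstrap process starting from G stabilizes at time exactly n − 3 and G_{n−3} = K_n. -/
open SimpleGraph

section Inflationary

variable {α : Type*} [PartialOrder α] {f : α → α}

lemma iterate_lt_iterate_succ (hf : ∀ x, x ≤ f x) {x : α} {i t : ℕ} (hit : i < t)
    (ht : f^[t] x ≠ f^[t - 1] x) : f^[i] x < f^[i + 1] x := by
  refine lt_of_le_of_ne (by rw [Function.iterate_succ_apply' f]; exact hf _) fun hfix => ht ?_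
  have hfix' : f (f^[i] x) = f^[i] x := by rw [← Function.iterate_succ_apply' f, hfix]
  have hstable : ∀ j, i ≤ j → f^[j] x = f^[i] x := fun j hij => by
    obtain ⟨k, rfl⟩ := Nat.exists_eq_add_of_le hij
    rw [add_comm, Function.iterate_add_apply, Function.iterate_fixed hfix']
  rw [hstable t hit.le, hstable (t - 1) (by omega)]

lemma lt_card_of_iterate_ne [Fintype α] (hf : ∀ x, x ≤ f x) {x : α} {t : ℕ}
    (ht : f^[t] x ≠ f^[t - 1] x) : t < Fintype.card α := by
  have hmono : StrictMono fun i : Fin (t + 1) => f^[i] x :=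
    Fin.strictMono_iff_lt_succ.2 fun i => iterate_lt_iterate_succ hf i.isLt ht
  simpa using Fintype.card_le_of_injective _ hmono.injective

end Inflationary

variable {V : Type*} {r : ℕ} {G H : SimpleGraph V} {u v w a b : V} {S : Finset V}

/-- The condition on the witness set `S` in `bootStep`. -/
def IsCliqueExcept (G : SimpleGraph V) (u v : V) (S : Finset V) : Prop :=
  ∀ x ∈ S, ∀ y ∈ S, x ≠ y → ¬((x = u ∧ y = v) ∨ (x = v ∧ y = u)) → G.Adj x y

lemma le_bootStep : G ≤ bootStep r G := fun _ _ => Or.inl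

lemma bootStep_mono (h : G ≤ H) : bootStep r G ≤ bootStep r H := by
  rintro u v (huv | ⟨hne, S, hS, hu, hv, hclique⟩)
  · exact Or.inl (h huv)
  · exact Or.inr ⟨hne, S, hS, hu, hv, fun x hx y hy hxy hex => h (hclique x hx y hy hxy hex)⟩

lemma monotone_iterate_bootStep (G : SimpleGraph V) :
    Monotone fun t => (bootStep r)^[t] G :=
  monotone_nat_of_le_succ fun t => by rw [Function.iterate_succ_apply']; exact le_bootStep

/-- Of the three triangles on `w` and two of three further vertices of `S`, the excluded pair
`uv` spoils at most two. -/
lemma IsCliqueExcept.exists_triangle (h : IsCliqueExcept G u v S) (hS : 4 ≤ S.card)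
    (hw : w ∈ S) : ∃ p q, G.Adj w p ∧ G.Adj w q ∧ G.Adj p q := by
  classical
  obtain ⟨x, hx, y, hy, z, hz, hxy, hxz, hyz⟩ :=
    Finset.two_lt_card.1 (by rw [Finset.card_erase_of_mem hw]; omega : 2 < (S.erase w).card)
  simp only [Finset.mem_erase] at hx hy hz
  have hadj : ∀ p ∈ S, ∀ q ∈ S, p ≠ q → (p = u ∧ q = v ∨ p = v ∧ q = u) ∨ G.Adj p q :=
    fun p hp q hq hpq => or_iff_not_imp_left.2 (h p hp q hq hpq)
  by_contra! hno
  grind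

lemma not_bootStep_adj_of_forall_not_adj (hr : 3 ≤ r) (hw : ∀ x, ¬G.Adj w x) (x : V) :
    ¬(bootStep r G).Adj w x := by
  classical
  rintro (hwx | ⟨hne, S, hS, hwS, hxS, hclique⟩)
  · exact hw x hwx
  obtain ⟨y, hy⟩ : ((S.erase w).erase x).Nonempty := by
    rw [← Finset.card_pos, Finset.card_erase_of_mem (Finset.mem_erase.2 ⟨hne.symm, hxS⟩),
      Finset.card_erase_of_mem hwS]
    omega
  simp only [Finset.mem_erase] at hy
  exact hw y (hclique w hwS y hy.2.2 hy.2.1.symm (by grind))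

lemma not_iterate_bootStep_adj_of_forall_not_adj (hr : 3 ≤ r) (hw : ∀ x, ¬H.Adj w x) (t : ℕ)
    (x : V) : ¬((bootStep r)^[t] H).Adj w x := by
  induction t generalizing x with
  | zero => exact hw x
  | succ t ih =>
    rw [Function.iterate_succ_apply']
    exact not_bootStep_adj_of_forall_not_adj hr ih x

def cliqueOn (U : Set V) : SimpleGraph V where
  Adj u v := u ≠ v ∧ u ∈ U ∧ v ∈ U
  symm := ⟨fun _ _ h => ⟨h.1.symm, h.2.2, h.2.1⟩⟩
  loopless := ⟨fun _ h => h.1 rfl⟩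

@[simp]
lemma cliqueOn_adj {U : Set V} : (cliqueOn U).Adj u v ↔ u ≠ v ∧ u ∈ U ∧ v ∈ U := Iff.rfl

@[simp]
lemma cliqueOn_univ : cliqueOn (Set.univ : Set V) = ⊤ := by
  ext u v
  simp

lemma bootStep_le_cliqueOn {U : Set V} (hr : 3 ≤ r) (h : G ≤ cliqueOn U) :
    bootStep r G ≤ cliqueOn U := by
  have hiso : ∀ w ∉ U, ∀ x, ¬(bootStep r G).Adj w x := fun w hw =>
    not_bootStep_adj_of_forall_not_adj hr fun x hwx => hw (h hwx).2.1
  intro u v huv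
  exact ⟨huv.ne, by_contra fun hu => hiso u hu v huv, by_contra fun hv => hiso v hv u huv.symm⟩

lemma iterate_bootStep_le_cliqueOn {U : Set V} (hr : 3 ≤ r) (h : G ≤ cliqueOn U) (t : ℕ) :
    (bootStep r)^[t] G ≤ cliqueOn U := by
  induction t with
  | zero => exact h
  | succ t ih => rw [Function.iterate_succ_apply']; exact bootStep_le_cliqueOn hr ih

lemma bootStep_cliqueOn_sdiff_edge {U : Finset V} (hr : 3 ≤ r) (hU : U.card = r) {p q : V}
    (hp : p ∈ U) (hq : q ∈ U) : bootStep r (cliqueOn ↑U \ edge p q) = cliqueOn ↑U := by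
  refine le_antisymm (bootStep_le_cliqueOn hr sdiff_le) fun x y hxy => ?_
  by_cases hpq : x = p ∧ y = q ∨ x = q ∧ y = p
  · refine Or.inr ⟨hxy.ne, U, hU, by grind, by grind, fun s hs t ht hst hex => ?_⟩
    simp only [sdiff_adj, cliqueOn_adj, Finset.mem_coe, edge_adj]
    grind
  · exact le_bootStep ⟨hxy, by simp [edge_adj, hpq]⟩

/-- Since `w` lies in no triangle of `H ⊔ edge w a ⊔ edge w b`, it lies in no witness set. -/
lemma bootStep_sup_edge_sup_edge (hr : 4 ≤ r) (hw : ∀ x, ¬H.Adj w x) (hab : ¬H.Adj a b) :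
    bootStep r (H ⊔ edge w a ⊔ edge w b) = bootStep r H ⊔ edge w a ⊔ edge w b := by
  set G := H ⊔ edge w a ⊔ edge w b
  have hGw : ∀ {p}, G.Adj w p → p = a ∨ p = b := by
    intro p hp
    simp only [G, sup_adj, edge_adj] at hp
    grind
  have hGH : ∀ {x y}, G.Adj x y → x ≠ w → y ≠ w → H.Adj x y := by
    intro x y hxy hx hy
    simp only [G, sup_adj, edge_adj] at hxy
    grind
  refine le_antisymm ?_ (sup_le (sup_le (bootStep_mono (le_sup_left.trans le_sup_left)) ?_) ?_)
  · rintro u v (huv | ⟨hne, S, hS, hu, hv, hclique⟩)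
    · exact sup_le_sup_right (sup_le_sup_right le_bootStep _) _ huv
    by_cases hwS : w ∈ S
    · exfalso
      obtain ⟨p, q, hp, hq, hpq⟩ := IsCliqueExcept.exists_triangle hclique (by omega) hwS
      have := hGH hpq hp.ne.symm hq.ne.symm
      rcases hGw hp with rfl | rfl <;> rcases hGw hq with rfl | rfl
      exacts [this.ne rfl, hab this, hab this.symm, this.ne rfl]
    · refine Or.inl (Or.inl (Or.inr ⟨hne, S, hS, hu, hv, fun x hx y hy hxy hex => ?_⟩))
      exact hGH (hclique x hx y hy hxy hex) (ne_of_mem_of_not_mem hx hwS)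
        (ne_of_mem_of_not_mem hy hwS)
  · exact (le_sup_right.trans le_sup_left).trans le_bootStep
  · exact le_sup_right.trans le_bootStep

lemma iterate_bootStep_sup_edge_sup_edge (hr : 4 ≤ r) (hw : ∀ x, ¬H.Adj w x) {T : ℕ}
    (hab : ¬((bootStep r)^[T] H).Adj a b) {t : ℕ} (ht : t ≤ T + 1) :
    (bootStep r)^[t] (H ⊔ edge w a ⊔ edge w b) = (bootStep r)^[t] H ⊔ edge w a ⊔ edge w b := by
  induction t with
  | zero => rfl
  | succ t ih =>
    rw [Function.iterate_succ_apply', Function.iterate_succ_apply', ih (by omega)]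
    exact bootStep_sup_edge_sup_edge hr
      (not_iterate_bootStep_adj_of_forall_not_adj (by omega) hw t)
      fun h => hab (monotone_iterate_bootStep H (by omega : t ≤ T) h)

lemma bootStep_cliqueOn_sup_edge_sup_edge {U : Set V} (hwU : w ∉ U) (ha : a ∈ U) (hb : b ∈ U)
    (hab : a ≠ b) : bootStep 4 (cliqueOn U ⊔ edge w a ⊔ edge w b) = cliqueOn (insert w U) := by
  classical
  have hle : cliqueOn U ⊔ edge w a ⊔ edge w b ≤ cliqueOn (insert w U) := by
    refine sup_le (sup_le ?_ ?_) ?_ <;> intro x y h <;> simp_all [edge_adj] <;> grind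
  refine le_antisymm (bootStep_le_cliqueOn (by norm_num) hle) ?_
  have hnew : ∀ x ∈ U, (bootStep 4 (cliqueOn U ⊔ edge w a ⊔ edge w b)).Adj w x := by
    intro x hx
    have hxw : x ≠ w := ne_of_mem_of_not_mem hx hwU
    by_cases hxab : x = a ∨ x = b
    · exact le_bootStep (by simp [edge_adj]; grind)
    refine Or.inr ⟨hxw.symm, {w, a, b, x}, ?_, by simp, by simp, ?_⟩
    · rw [Finset.card_insert_of_notMem, Finset.card_insert_of_notMem, Finset.card_pair] <;>
        simp <;> grind
    · intro p hp q hq hpq hex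
      simp only [Finset.mem_insert, Finset.mem_singleton] at hp hq
      simp only [sup_adj, cliqueOn_adj, edge_adj]
      grind
  rintro x y ⟨hxy, hx, hy⟩
  rcases hx with rfl | hx <;> rcases hy with rfl | hy
  · exact absurd rfl hxy
  · exact hnew y hy
  · exact (hnew x hx).symm
  · exact le_bootStep (Or.inl (Or.inl ⟨hxy, hx, hy⟩))

lemma exists_iterate_bootStep_eq_cliqueOn_insert {U : Finset V} (hU : 3 ≤ U.card) (hwU : w ∉ U)
    (hHU : H ≤ cliqueOn U) {T : ℕ} (htop : (bootStep 4)^[T + 1] H = cliqueOn U)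
    (hne : (bootStep 4)^[T] H ≠ cliqueOn U) :
    ∃ G ≤ cliqueOn (insert w U : Set V), (bootStep 4)^[T + 2] G = cliqueOn (insert w U) ∧
      (bootStep 4)^[T + 1] G ≠ cliqueOn (insert w U) := by
  classical
  obtain ⟨a, b, hab, hnab⟩ : ∃ a b, (cliqueOn (U : Set V)).Adj a b ∧
      ¬((bootStep 4)^[T] H).Adj a b := by
    by_contra! h
    exact hne (le_antisymm (iterate_bootStep_le_cliqueOn (by norm_num) hHU _) h)
  obtain ⟨x, hx, hxa, hxb⟩ : ∃ x ∈ U, x ≠ a ∧ x ≠ b := by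
    by_contra! h
    have := Finset.card_le_card (fun x hx => by grind : U ⊆ {a, b})
    have := Finset.card_le_two (a := a) (b := b)
    omega
  have hiter := iterate_bootStep_sup_edge_sup_edge le_rfl (fun x h => hwU (hHU h).2.1) hnab
    (le_refl (T + 1))
  rw [htop] at hiter
  refine ⟨H ⊔ edge w a ⊔ edge w b, ?_, ?_, fun h => ?_⟩
  · refine sup_le (sup_le (hHU.trans ?_) ?_) ?_ <;> intro y z h <;> simp_all [edge_adj] <;> grind
  · rw [Function.iterate_succ_apply', hiter]
    exact bootStep_cliqueOn_sup_edge_sup_edge hwU hab.2.1 hab.2.2 hab.1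
  · have : (cliqueOn ↑U ⊔ edge w a ⊔ edge w b).Adj w x := by
      rw [← hiter, h]
      exact ⟨(ne_of_mem_of_not_mem hx hwU).symm, by simp, by simp [hx]⟩
    simp [edge_adj] at this
    grind

lemma exists_iterate_bootStep_eq_cliqueOn (U : Finset V) (hU : 4 ≤ U.card) :
    ∃ G ≤ cliqueOn (U : Set V), (bootStep 4)^[U.card - 3] G = cliqueOn U ∧
      (bootStep 4)^[U.card - 4] G ≠ cliqueOn U := by
  classical
  induction U using Finset.induction_on with
  | empty => simp at hU
  | insert w U hwU ih =>
    rw [Finset.card_insert_of_notMem hwU] at hU ⊢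
    rcases (by omega : U.card = 3 ∨ 4 ≤ U.card) with hU3 | hU4
    · have hcard : (insert w U).card = 4 := by rw [Finset.card_insert_of_notMem hwU, hU3]
      obtain ⟨p, hp, q, hq, hpq⟩ := Finset.one_lt_card.1 (by omega : 1 < (insert w U).card)
      refine ⟨cliqueOn ↑(insert w U) \ edge p q, sdiff_le, ?_, fun h => ?_⟩
      · rw [hU3]
        exact bootStep_cliqueOn_sdiff_edge (by norm_num) hcard hp hq
      · rw [hU3, Nat.sub_self, Function.iterate_zero_apply] at h
        have : (cliqueOn ↑(insert w U) \ edge p q).Adj p q := by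
          rw [h]
          exact ⟨hpq, hp, hq⟩
        simp [edge_adj, hpq] at this
    · obtain ⟨H, hHU, htop, hne⟩ := ih hU4
      rw [show U.card - 3 = U.card - 4 + 1 by omega] at htop
      rw [show U.card + 1 - 3 = U.card - 4 + 2 by omega,
        show U.card + 1 - 4 = U.card - 4 + 1 by omega, Finset.coe_insert]
      exact exists_iterate_bootStep_eq_cliqueOn_insert (by omega) hwU hHU htop hne

/-- For every `n ≥ 3`, `M_4(n) ≥ n - 3`; moreover for every `n ≥ 4` there is a graph `G` on
`n` vertices whose `K_4`-bootstrap process stabilizes at time exactly `n - 3` with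
`G_{n-3} = K_n` (so `G_{n-3}` is complete and `G_{n-3} ≠ G_{n-4}`). -/
theorem maxRunTime_K4_lower :
    (∀ n : ℕ, 3 ≤ n → n - 3 ≤ maxRunTime 4 n) ∧
    (∀ n : ℕ, 4 ≤ n → ∃ G : SimpleGraph (Fin n),
      (bootStep 4)^[n - 3] G = ⊤ ∧ (bootStep 4)^[n - 3] G ≠ (bootStep 4)^[n - 4] G) := by
  have hslow : ∀ n, 4 ≤ n → ∃ G : SimpleGraph (Fin n),
      (bootStep 4)^[n - 3] G = ⊤ ∧ (bootStep 4)^[n - 3] G ≠ (bootStep 4)^[n - 4] G := by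
    intro n hn
    obtain ⟨G, -, htop, hne⟩ := exists_iterate_bootStep_eq_cliqueOn (Finset.univ : Finset (Fin n))
      (by simpa using hn)
    simp only [Finset.card_univ, Fintype.card_fin, Finset.coe_univ, cliqueOn_univ] at htop hne
    exact ⟨G, htop, htop ▸ hne.symm⟩
  refine ⟨fun n hn => ?_, hslow⟩
  rcases (by omega : n = 3 ∨ 4 ≤ n) with rfl | hn4
  · exact Nat.zero_le _
  obtain ⟨G, -, hne⟩ := hslow n hn4
  refine le_csSup ⟨_, fun t ⟨G, h⟩ => (lt_card_of_iterate_ne (fun _ => le_bootStep) h).le⟩ ⟨G, ?_⟩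
  rwa [show n - 3 - 1 = n - 4 by omega]
end

section
/- For every integer n ≥ 3, the maximum running time of the K_4-bootstrap percolation process satisfies M_4(n) ≤ n − 3; that is, for every graph G on n vertices the K_4-bootstrap process starting from G stabilizes by time n − 3. -/
/-!
An edge `uv` that appears at time `t + 1` is created by a diamond (`K₄` minus `uv`) on
`{u, v, a, b}` in `G_t`, and some edge `pq` of the diamond is itself new at time `t`, so by
induction `pq` lies in a large clique `W`. Two cliques sharing an edge merge in one step, because
each missing pair completes a `K₄` with that edge. Merging the diamond into `W` shows that `u` and
`v` lie in a clique of order at least `s + 3` in `G_s` for `s = t + 1` or `s = t + 2`. Hence a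
process that still changes at time `t + 1` needs at least `t + 4` vertices.
-/

namespace BootstrapK4

variable {V : Type*}

theorem le_bootStep (r : ℕ) (G : SimpleGraph V) : G ≤ bootStep r G :=
  fun _ _ h ↦ Or.inl h

def IsDiamond (H : SimpleGraph V) (u v a b : V) : Prop :=
  H.Adj u a ∧ H.Adj u b ∧ H.Adj v a ∧ H.Adj v b ∧ H.Adj a b

theorem IsDiamond.card_eq_four [DecidableEq V] {H : SimpleGraph V} {u v a b : V}
    (hD : IsDiamond H u v a b) (huv : u ≠ v) : ({u, v, a, b} : Finset V).card = 4 := by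
  obtain ⟨hua, hub, hva, hvb, hab⟩ := hD
  rw [Finset.card_insert_of_notMem, Finset.card_insert_of_notMem, Finset.card_pair hab.ne]
  · simp [hva.ne, hvb.ne]
  · simp [huv, hua.ne, hub.ne]

theorem bootStep_four_adj_iff {H : SimpleGraph V} {u v : V} :
    (bootStep 4 H).Adj u v ↔ H.Adj u v ∨ u ≠ v ∧ ∃ a b, IsDiamond H u v a b := by
  classical
  refine or_congr_right ⟨?_, ?_⟩
  · rintro ⟨huv, S, hS, huS, hvS, hS_adj⟩
    have hsub : {u, v} ⊆ S := Finset.insert_subset huS (Finset.singleton_subset_iff.2 hvS)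
    obtain ⟨a, b, hab, hSab⟩ : ∃ a b, a ≠ b ∧ S \ {u, v} = {a, b} := by
      rw [← Finset.card_eq_two, Finset.card_sdiff_of_subset hsub, hS, Finset.card_pair huv]
    have ha : a ∈ S \ {u, v} := by simp [hSab]
    have hb : b ∈ S \ {u, v} := by simp [hSab]
    simp only [Finset.mem_sdiff, Finset.mem_insert, Finset.mem_singleton, not_or] at ha hb
    refine ⟨huv, a, b, ?_, ?_, ?_, ?_, ?_⟩ <;> apply hS_adj <;> simp_all [eq_comm]
  · rintro ⟨huv, a, b, hD⟩
    refine ⟨huv, {u, v, a, b}, hD.card_eq_four huv, by simp, by simp, ?_⟩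
    obtain ⟨hua, hub, hva, hvb, hab⟩ := hD
    simp only [Finset.mem_insert, Finset.mem_singleton]
    rintro x (rfl | rfl | rfl | rfl) y (rfl | rfl | rfl | rfl) <;> simp_all [SimpleGraph.adj_comm]

theorem IsDiamond.isClique_bootStep [DecidableEq V] {H : SimpleGraph V} {u v a b : V}
    (hD : IsDiamond H u v a b) (huv : u ≠ v) :
    (bootStep 4 H).IsClique (({u, v, a, b} : Finset V) : Set V) := by
  have huv' : (bootStep 4 H).Adj u v := bootStep_four_adj_iff.2 (.inr ⟨huv, a, b, hD⟩)
  obtain ⟨hua, hub, hva, hvb, hab⟩ := hD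
  simp only [Finset.coe_insert, Finset.coe_singleton]
  rintro x (rfl | rfl | rfl | rfl) y (rfl | rfl | rfl | rfl) hxy <;>
    first
    | exact absurd rfl hxy
    | assumption
    | exact huv'.symm
    | exact le_bootStep 4 H (by assumption)
    | exact (le_bootStep 4 H (by assumption)).symm

theorem isClique_union_bootStep_four_of_adj [DecidableEq V] {K : SimpleGraph V}
    {W S : Finset V} {a b : V} (hW : K.IsClique (W : Set V)) (ha : a ∈ W) (hb : b ∈ W)
    (hab : K.Adj a b) (hS : (bootStep 4 K).IsClique (S : Set V))
    (hSab : ∀ y ∈ S, y ∉ W → K.Adj y a ∧ K.Adj y b) :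
    (bootStep 4 K).IsClique (W ∪ S : Finset V) := by
  have := (bootStep 4 K).symm
  rw [Finset.coe_union, SimpleGraph.IsClique, Set.pairwise_union_of_symm]
  refine ⟨hW.mono (le_bootStep 4 K), hS, fun x hx y hy hxy ↦ ?_⟩
  by_cases hyW : y ∈ W
  · exact le_bootStep 4 K (hW hx hyW hxy)
  obtain ⟨hya, hyb⟩ := hSab y hy hyW
  by_cases hxab : x = a ∨ x = b
  · rcases hxab with rfl | rfl
    exacts [le_bootStep 4 K hya.symm, le_bootStep 4 K hyb.symm]
  push Not at hxab
  exact bootStep_four_adj_iff.2 <| .inr ⟨hxy, a, b, hW hx ha hxab.1, hW hx hb hxab.2,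
    hya, hyb, hab⟩

theorem isClique_union_bootStep_four [DecidableEq V] {K : SimpleGraph V} {W S : Finset V}
    {p q : V} (hW : K.IsClique (W : Set V)) (hS : K.IsClique (S : Set V)) (hpW : p ∈ W)
    (hqW : q ∈ W) (hpS : p ∈ S) (hqS : q ∈ S) (hpq : p ≠ q) :
    (bootStep 4 K).IsClique (W ∪ S : Finset V) :=
  isClique_union_bootStep_four_of_adj hW hpW hqW (hW hpW hqW hpq) (hS.mono (le_bootStep 4 K))
    fun _ hy hyW ↦ ⟨hS hy hpS (ne_of_mem_of_not_mem hpW hyW).symm,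
      hS hy hqS (ne_of_mem_of_not_mem hqW hyW).symm⟩

def HasCliqueThrough (K : SimpleGraph V) (m : ℕ) (u v : V) : Prop :=
  ∃ W : Finset V, K.IsClique (W : Set V) ∧ u ∈ W ∧ v ∈ W ∧ m ≤ W.card

theorem HasCliqueThrough.le_card [Fintype V] {K : SimpleGraph V} {m : ℕ} {u v : V}
    (h : HasCliqueThrough K m u v) : m ≤ Fintype.card V := by
  obtain ⟨W, -, -, -, hm⟩ := h
  exact hm.trans W.card_le_univ

section Diamond

variable [DecidableEq V] {H : SimpleGraph V} {u v a b p q : V} {m : ℕ}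

theorem HasCliqueThrough.of_isDiamond_of_bootStep (hD : IsDiamond H u v a b) (huv : u ≠ v)
    (hp : p ∈ ({u, v, a, b} : Finset V)) (hq : q ∈ ({u, v, a, b} : Finset V)) (hpq : p ≠ q)
    (h : HasCliqueThrough (bootStep 4 H) m p q) :
    HasCliqueThrough (bootStep 4 H) m u v ∨
      HasCliqueThrough (bootStep 4 (bootStep 4 H)) (m + 1) u v := by
  obtain ⟨W, hW, hpW, hqW, hm⟩ := h
  by_cases huvW : u ∈ W ∧ v ∈ W
  · exact .inl ⟨W, hW, huvW.1, huvW.2, hm⟩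
  set S : Finset V := {u, v, a, b}
  have hS : 0 < (S \ W).card := by
    rw [not_and_or] at huvW
    rcases huvW with hu | hv
    exacts [Finset.card_pos.2 ⟨u, by simp [S, hu]⟩, Finset.card_pos.2 ⟨v, by simp [S, hv]⟩]
  refine .inr ⟨W ∪ S, isClique_union_bootStep_four hW (hD.isClique_bootStep huv) hpW hqW hp hq
    hpq, by simp [S], by simp [S], ?_⟩
  have := Finset.card_sdiff_add_card S W
  rw [Finset.union_comm]
  omega

theorem HasCliqueThrough.of_isDiamond (hD : IsDiamond H u v a b) (huv : u ≠ v)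
    (huvH : ¬H.Adj u v)
    (hp : p ∈ ({u, v, a, b} : Finset V)) (hq : q ∈ ({u, v, a, b} : Finset V)) (hpq : p ≠ q)
    (h : HasCliqueThrough H m p q) :
    HasCliqueThrough (bootStep 4 H) (m + 1) u v ∨
      HasCliqueThrough (bootStep 4 (bootStep 4 H)) (m + 2) u v := by
  obtain ⟨W, hW, hpW, hqW, hm⟩ := h
  set S : Finset V := {u, v, a, b}
  obtain ⟨x, hx, hxW⟩ : ∃ x, (x = u ∨ x = v) ∧ x ∉ W := by
    by_contra! h
    exact huvH (hW (h u (.inl rfl)) (h v (.inr rfl)) huv)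
  have hxS : x ∈ S \ W := by rcases hx with rfl | rfl <;> simp [S, hxW]
  have hcard := Finset.card_sdiff_add_card S W
  rw [Finset.union_comm] at hcard
  by_cases hab : a ∈ W ∧ b ∈ W
  · refine .inl ⟨W ∪ S, isClique_union_bootStep_four_of_adj hW hab.1 hab.2 hD.2.2.2.2
      (hD.isClique_bootStep huv) ?_, by simp [S], by simp [S], ?_⟩
    · intro y hy hyW
      simp only [S, Finset.mem_insert, Finset.mem_singleton] at hy
      rcases hy with rfl | rfl | rfl | rfl
      exacts [⟨hD.1, hD.2.1⟩, ⟨hD.2.2.1, hD.2.2.2.1⟩, absurd hab.1 hyW, absurd hab.2 hyW]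
    · have := Finset.card_pos.2 ⟨x, hxS⟩
      omega
  · obtain ⟨y, hy, hyW⟩ : ∃ y, (y = a ∨ y = b) ∧ y ∉ W := by
      rw [not_and_or] at hab
      rcases hab with ha | hb
      exacts [⟨a, .inl rfl, ha⟩, ⟨b, .inr rfl, hb⟩]
    have hyS : y ∈ S \ W := by rcases hy with rfl | rfl <;> simp [S, hyW]
    have hxy : x ≠ y := by
      rcases hx with rfl | rfl <;> rcases hy with rfl | rfl
      exacts [hD.1.ne, hD.2.1.ne, hD.2.2.1.ne, hD.2.2.2.1.ne]
    refine .inr ⟨W ∪ S, isClique_union_bootStep_four (hW.mono (le_bootStep 4 H))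
      (hD.isClique_bootStep huv) hpW hqW hp hq hpq, by simp [S], by simp [S], ?_⟩
    have := Finset.one_lt_card.2 ⟨x, hxS, y, hyS, hxy⟩
    omega

end Diamond

theorem hasCliqueThrough_of_adj_iterate_bootStep_four (G : SimpleGraph V) (t : ℕ) {u v : V}
    (h : ((bootStep 4)^[t + 1] G).Adj u v) (h' : ¬((bootStep 4)^[t] G).Adj u v) :
    HasCliqueThrough ((bootStep 4)^[t + 1] G) (t + 4) u v ∨
      HasCliqueThrough ((bootStep 4)^[t + 2] G) (t + 5) u v := by
  classical
  induction t generalizing u v with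
  | zero =>
    obtain h | ⟨huv, a, b, hD⟩ := bootStep_four_adj_iff.1 h
    · exact absurd h h'
    exact .inl ⟨{u, v, a, b}, hD.isClique_bootStep huv, by simp, by simp,
      (hD.card_eq_four huv).ge⟩
  | succ t ih =>
    set H := (bootStep 4)^[t + 1] G with hH
    have h2 : (bootStep 4)^[t + 2] G = bootStep 4 H := Function.iterate_succ_apply' _ _ _
    have h3 : (bootStep 4)^[t + 3] G = bootStep 4 (bootStep 4 H) := by
      rw [← h2]; exact Function.iterate_succ_apply' _ _ _
    rw [show t + 1 + 1 = t + 2 from rfl, h2] at h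
    rw [show t + 1 + 1 = t + 2 from rfl, show t + 1 + 2 = t + 3 from rfl, h2, h3]
    obtain h | ⟨huv, a, b, hD⟩ := bootStep_four_adj_iff.1 h
    · exact absurd h h'
    obtain ⟨p, hp, q, hq, hpq, hpq'⟩ : ∃ p ∈ ({u, v, a, b} : Finset V),
        ∃ q ∈ ({u, v, a, b} : Finset V), H.Adj p q ∧ ¬((bootStep 4)^[t] G).Adj p q := by
      by_contra! hold
      refine h' ?_
      rw [hH, Function.iterate_succ_apply']
      obtain ⟨hua, hub, hva, hvb, hab⟩ := hD
      exact bootStep_four_adj_iff.2 <| .inr ⟨huv, a, b, hold _ (by simp) _ (by simp) hua,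
        hold _ (by simp) _ (by simp) hub, hold _ (by simp) _ (by simp) hva,
        hold _ (by simp) _ (by simp) hvb, hold _ (by simp) _ (by simp) hab⟩
    rcases ih hpq hpq' with hW | hW
    · exact hW.of_isDiamond hD huv h' hp hq hpq.ne
    · rw [h2] at hW
      exact hW.of_isDiamond_of_bootStep hD huv hp hq hpq.ne

theorem add_four_le_card_of_iterate_bootStep_four_ne [Fintype V] (G : SimpleGraph V) {t : ℕ}
    (h : (bootStep 4)^[t + 1] G ≠ (bootStep 4)^[t] G) : t + 4 ≤ Fintype.card V := by
  obtain ⟨u, v, h1, h0⟩ : ∃ u v, ((bootStep 4)^[t + 1] G).Adj u v ∧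
      ¬((bootStep 4)^[t] G).Adj u v := by
    by_contra! hc
    refine h (le_antisymm (fun u v ↦ hc u v) ?_)
    rw [Function.iterate_succ_apply']
    exact le_bootStep 4 _
  rcases hasCliqueThrough_of_adj_iterate_bootStep_four G t h1 h0 with hW | hW
  · exact hW.le_card
  · exact (Nat.le_succ _).trans hW.le_card

end BootstrapK4

theorem maxRunTime_K4_upper_general (n : ℕ) :
    maxRunTime 4 n ≤ n - 3 ∧
    ∀ G : SimpleGraph (Fin n), (bootStep 4)^[(n - 3) + 1] G = (bootStep 4)^[n - 3] G := by
  have key (G : SimpleGraph (Fin n)) (t : ℕ) (h : (bootStep 4)^[t + 1] G ≠ (bootStep 4)^[t] G) :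
      t + 4 ≤ n :=
    (BootstrapK4.add_four_le_card_of_iterate_bootStep_four_ne G h).trans_eq (Fintype.card_fin n)
  refine ⟨csSup_le' ?_, fun G ↦ ?_⟩
  · rintro (_ | t) ⟨G, hG⟩
    · exact Nat.zero_le _
    · have := key G t hG
      omega
  · by_contra hG
    have := key G _ hG
    omega

/-- For every `n ≥ 3`, `M_4(n) ≤ n - 3`; moreover the `K_4`-bootstrap process starting from
any graph `G` on `n` vertices stabilizes by time `n - 3`, i.e. `G_{n-2} = G_{n-3}`. -/
theorem maxRunTime_K4_upper (n : ℕ) (hn : 3 ≤ n) :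
    maxRunTime 4 n ≤ n - 3 ∧
    ∀ G : SimpleGraph (Fin n), (bootStep 4)^[(n - 3) + 1] G = (bootStep 4)^[n - 3] G :=
  maxRunTime_K4_upper_general n
end

section
/- Let r ≥ 4. If e_0, H_1, e_1, H_2, …, e_{t−1}, H_t, e_t is a good K_r-chain, then the graph G_0 = (∪_{i=1}^t H_i) − {e_1, e_2, …, e_t} evolves in the K_r-bootstrap percolation process as follows: for every 0 ≤ i ≤ t, G_i = G_0 ∪ {e_1, …, e_i}; in particular, exactly one new edge is infected at each of the first t steps, and the process stabilizes at time t. -/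
/-- `H 1, …, H t` is a `K_r`-chain: each `H i` is a set of `r` vertices (spanning a complete
graph), and for `i < j` the cliques `H i` and `H j` are edge-disjoint (share at most one
vertex) unless `j = i + 1`, in which case they share exactly one edge (exactly two
vertices). -/
def IsKrChain {n : ℕ} (r t : ℕ) (H : ℕ → Finset (Fin n)) : Prop :=
  (∀ i, 1 ≤ i → i ≤ t → (H i).card = r) ∧
  (∀ i j, 1 ≤ i → i < j → j ≤ t →
    (j = i + 1 → (H i ∩ H j).card = 2) ∧ (j ≠ i + 1 → (H i ∩ H j).card ≤ 1))

/-- The chain `H 1, …, H t` has an external `K_r^-`: there is an `r`-set `B`, not equal to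
any `H i`, and a pair `x ≠ y` in `B`, such that every edge within `B` other than (possibly)
`xy` lies inside some `H i`. -/
def HasExternalKrMinus {n : ℕ} (r t : ℕ) (H : ℕ → Finset (Fin n)) : Prop :=
  ∃ B : Finset (Fin n), B.card = r ∧ (∀ i, 1 ≤ i → i ≤ t → B ≠ H i) ∧
    ∃ x ∈ B, ∃ y ∈ B, x ≠ y ∧
      ∀ u ∈ B, ∀ v ∈ B, u ≠ v → ¬((u = x ∧ v = y) ∨ (u = y ∧ v = x)) →
        ∃ i, 1 ≤ i ∧ i ≤ t ∧ u ∈ H i ∧ v ∈ H i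

/-- The graph `(⋃_{i=1}^t K_{H i}) - {e 1, …, e t}`: the union of the complete graphs on the
sets `H 1, …, H t` with the edges `e 1, …, e t` removed. -/
def chainGraph {n : ℕ} (t : ℕ) (H : ℕ → Finset (Fin n)) (e : ℕ → Finset (Fin n)) :
    SimpleGraph (Fin n) where
  Adj u v := u ≠ v ∧ (∃ i, 1 ≤ i ∧ i ≤ t ∧ u ∈ H i ∧ v ∈ H i) ∧
    ∀ k, 1 ≤ k → k ≤ t → ({u, v} : Finset (Fin n)) ≠ e k
  symm := by
    constructor
    rintro a b ⟨hne, ⟨i, h1, h2, ha, hb⟩, he⟩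
    refine ⟨hne.symm, ⟨i, h1, h2, hb, ha⟩, ?_⟩
    intro k hk1 hk2
    rw [Finset.pair_comm]
    exact he k hk1 hk2
  loopless := ⟨fun a h => h.1 rfl⟩

/-- The graph `chainGraph t H e` together with the edges `e 1, …, e m`. -/
def chainGraphUpTo {n : ℕ} (t m : ℕ) (H : ℕ → Finset (Fin n)) (e : ℕ → Finset (Fin n)) :
    SimpleGraph (Fin n) where
  Adj u v := (chainGraph t H e).Adj u v ∨
    (u ≠ v ∧ ∃ k, 1 ≤ k ∧ k ≤ m ∧ ({u, v} : Finset (Fin n)) = e k)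
  symm := by
    constructor
    rintro a b (h | ⟨hne, k, h1, h2, hk⟩)
    · exact Or.inl ((chainGraph t H e).adj_symm h)
    · exact Or.inr ⟨hne.symm, k, h1, h2, by rwa [Finset.pair_comm]⟩
  loopless := by
    constructor
    rintro a (h | ⟨hne, _⟩)
    · exact (chainGraph t H e).irrefl h
    · exact hne rfl

theorem Finset.pair_eq_pair_iff {α : Type*} [DecidableEq α] {x y z w : α} :
    ({x, y} : Finset α) = {z, w} ↔ x = z ∧ y = w ∨ x = w ∧ y = z := by
  rw [← Finset.coe_inj, Finset.coe_pair, Finset.coe_pair, Set.pair_eq_pair_iff]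

theorem Finset.pair_subset_iff {α : Type*} [DecidableEq α] {a b : α} {s : Finset α} :
    {a, b} ⊆ s ↔ a ∈ s ∧ b ∈ s := by
  rw [Finset.insert_subset_iff, Finset.singleton_subset_iff]

theorem two_le_card_inter_of_subset {α : Type*} [DecidableEq α] {s A B : Finset α}
    (hs : s.card = 2) (hA : s ⊆ A) (hB : s ⊆ B) : 2 ≤ (A ∩ B).card :=
  hs ▸ Finset.card_le_card (Finset.subset_inter hA hB)

variable {n r t : ℕ} {H e : ℕ → Finset (Fin n)}

theorem IsKrChain.eq_succ_of_two_le_card_inter {i j : ℕ} (hH : IsKrChain r t H) (hi : 1 ≤ i)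
    (hij : i < j) (hjt : j ≤ t) (h : 2 ≤ (H i ∩ H j).card) : j = i + 1 := by
  by_contra hne
  have := (hH.2 i j hi hij hjt).2 hne
  omega

theorem chainGraphUpTo_zero (t : ℕ) (H e : ℕ → Finset (Fin n)) :
    chainGraphUpTo t 0 H e = chainGraph t H e := by
  ext u v
  refine ⟨?_, Or.inl⟩
  rintro (h | ⟨_, k, hk, hk0, _⟩)
  · exact h
  · omega

theorem chainGraphUpTo_adj_or_eq_edge {j m : ℕ} {u v : Fin n} (hj : 1 ≤ j) (hjt : j ≤ t)
    (huv : u ≠ v) (hu : u ∈ H j) (hv : v ∈ H j) :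
    (chainGraphUpTo t m H e).Adj u v ∨ ∃ k, m < k ∧ k ≤ t ∧ ({u, v} : Finset (Fin n)) = e k := by
  by_cases hedge : ∃ k, 1 ≤ k ∧ k ≤ t ∧ ({u, v} : Finset (Fin n)) = e k
  · obtain ⟨k, hk, hkt, huvk⟩ := hedge
    rcases le_or_gt k m with hkm | hmk
    · exact Or.inl (Or.inr ⟨huv, k, hk, hkm, huvk⟩)
    · exact Or.inr ⟨k, hmk, hkt, huvk⟩
  · push Not at hedge
    exact Or.inl (Or.inl ⟨huv, ⟨j, hj, hjt, hu, hv⟩, hedge⟩)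

structure IsChainEdgeSeq (r t : ℕ) (H e : ℕ → Finset (Fin n)) : Prop where
  chain : IsKrChain r t H
  mid : ∀ i, 1 ≤ i → i + 1 ≤ t → e i = H i ∩ H (i + 1)
  card_last : (e t).card = 2
  last_subset : e t ⊆ H t
  last_ne : e t ≠ e (t - 1)

namespace IsChainEdgeSeq

variable {j k l m : ℕ} {u v : Fin n}

theorem card_edge (hC : IsChainEdgeSeq r t H e) (hk : 1 ≤ k) (hkt : k ≤ t) : (e k).card = 2 := by
  rcases hkt.eq_or_lt with rfl | hlt
  · exact hC.card_last
  · rw [hC.mid k hk hlt]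
    exact (hC.chain.2 k (k + 1) hk k.lt_succ_self hlt).1 rfl

theorem edge_subset (hC : IsChainEdgeSeq r t H e) (hk : 1 ≤ k) (hkt : k ≤ t) : e k ⊆ H k := by
  rcases hkt.eq_or_lt with rfl | hlt
  · exact hC.last_subset
  · rw [hC.mid k hk hlt]
    exact Finset.inter_subset_left

theorem edge_subset_succ (hC : IsChainEdgeSeq r t H e) (hk : 1 ≤ k) (hkt : k + 1 ≤ t) :
    e k ⊆ H (k + 1) := by
  rw [hC.mid k hk hkt]
  exact Finset.inter_subset_right

theorem eq_or_eq_succ_of_edge_subset (hC : IsChainEdgeSeq r t H e) (hk : 1 ≤ k) (hkt : k ≤ t)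
    (hj : 1 ≤ j) (hjt : j ≤ t) (h : e k ⊆ H j) : j = k ∨ j = k + 1 := by
  have hinter := two_le_card_inter_of_subset (hC.card_edge hk hkt) (hC.edge_subset hk hkt) h
  rcases lt_trichotomy j k with hjk | rfl | hkj
  · rw [Finset.inter_comm] at hinter
    have hkj : k = j + 1 := hC.chain.eq_succ_of_two_le_card_inter hj hjk hkt hinter
    exfalso
    rcases hkt.eq_or_lt with rfl | hlt
    · -- `e k` would be the whole two-element intersection `H j ∩ H k = e j`
      have hcard : (H j ∩ H k).card = 2 := (hC.chain.2 j k hj hjk hkt).1 hkj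
      have hsub : e k ⊆ H j ∩ H k := Finset.subset_inter h (hC.edge_subset hk le_rfl)
      have hjmid : e j = H j ∩ H k := hkj ▸ hC.mid j hj (hkj ▸ le_rfl)
      apply hC.last_ne
      rw [show k - 1 = j by omega, hjmid]
      exact Finset.eq_of_subset_of_card_le hsub (by rw [hcard, hC.card_last])
    · have := hC.chain.eq_succ_of_two_le_card_inter hj (by omega) hlt
        (two_le_card_inter_of_subset (hC.card_edge hk hkt) h (hC.edge_subset_succ hk hlt))
      omega
  · exact Or.inl rfl
  · exact Or.inr (hC.chain.eq_succ_of_two_le_card_inter hk hkj hjt hinter)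

theorem edge_ne (hC : IsChainEdgeSeq r t H e) (hk : 1 ≤ k) (hkt : k ≤ t) (hl : 1 ≤ l)
    (hlt : l ≤ t) (hkl : k ≠ l) : e k ≠ e l := by
  wlog hlt' : k < l generalizing k l
  · exact (this hl hlt hk hkt hkl.symm (by omega)).symm
  intro heq
  have hlk : l = k + 1 := by
    have := hC.eq_or_eq_succ_of_edge_subset hk hkt hl hlt (heq ▸ hC.edge_subset hl hlt)
    omega
  rcases hlt.eq_or_lt with rfl | hlt
  · exact hC.last_ne (by rw [← heq, hlk]; rfl)
  · have := hC.eq_or_eq_succ_of_edge_subset hk hkt (by omega) hlt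
      (heq ▸ hC.edge_subset_succ hl hlt)
    omega

theorem exists_clique_of_adj (hC : IsChainEdgeSeq r t H e) (hm : m ≤ t)
    (h : (chainGraphUpTo t m H e).Adj u v) : ∃ j, 1 ≤ j ∧ j ≤ t ∧ u ∈ H j ∧ v ∈ H j := by
  rcases h with ⟨_, hclique, _⟩ | ⟨_, k, hk, hkm, huvk⟩
  · exact hclique
  · have hsub : {u, v} ⊆ H k := huvk ▸ hC.edge_subset hk (hkm.trans hm)
    rw [Finset.pair_subset_iff] at hsub
    exact ⟨k, hk, hkm.trans hm, hsub⟩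

theorem not_adj_of_eq_edge (hC : IsChainEdgeSeq r t H e) (hmk : m < k) (hkt : k ≤ t)
    (huvk : ({u, v} : Finset (Fin n)) = e k) : ¬ (chainGraphUpTo t m H e).Adj u v := by
  rintro (⟨_, _, hnot⟩ | ⟨_, l, hl, hlm, huvl⟩)
  · exact hnot k (by omega) hkt huvk
  · exact hC.edge_ne hl (by omega) (by omega) hkt (by omega) (huvl.symm.trans huvk)

theorem exists_eq_clique (hC : IsChainEdgeSeq r t H e) (hgood : ¬ HasExternalKrMinus r t H)
    (hm : m ≤ t) (huv : u ≠ v) {S : Finset (Fin n)} (hS : S.card = r) (hu : u ∈ S) (hv : v ∈ S)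
    (hadj : ∀ x ∈ S, ∀ y ∈ S, x ≠ y → ¬((x = u ∧ y = v) ∨ (x = v ∧ y = u)) →
      (chainGraphUpTo t m H e).Adj x y) :
    ∃ j, 1 ≤ j ∧ j ≤ t ∧ S = H j := by
  by_contra! hne
  exact hgood ⟨S, hS, hne, u, hu, v, hv, huv, fun x hx y hy hxy hno =>
    hC.exists_clique_of_adj hm (hadj x hx y hy hxy hno)⟩

theorem adj_or_eq_edge_succ_of_bootStep_adj (hC : IsChainEdgeSeq r t H e)
    (hgood : ¬ HasExternalKrMinus r t H) (hm : m ≤ t)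
    (h : (bootStep r (chainGraphUpTo t m H e)).Adj u v) :
    (chainGraphUpTo t m H e).Adj u v ∨ (m < t ∧ ({u, v} : Finset (Fin n)) = e (m + 1)) := by
  rcases h with h | ⟨huv, S, hS, hu, hv, hadj⟩
  · exact Or.inl h
  obtain ⟨j, hj, hjt, rfl⟩ := hC.exists_eq_clique hgood hm huv hS hu hv hadj
  rcases chainGraphUpTo_adj_or_eq_edge hj hjt huv hu hv with h | ⟨k, hmk, hkt, huvk⟩
  · exact Or.inl h
  rcases (Nat.succ_le_of_lt hmk).eq_or_lt with rfl | hsucc_lt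
  · exact Or.inr ⟨by omega, huvk⟩
  exfalso
  -- `H j` also contains `e (k - 1)` or `e (k + 1)`; that edge is missing yet not `uv`
  have hkj : j = k ∨ j = k + 1 := hC.eq_or_eq_succ_of_edge_subset (by omega) hkt hj hjt
    (huvk ▸ Finset.pair_subset_iff.mpr ⟨hu, hv⟩)
  obtain ⟨k', hk'k, hmk', hk't, hk'j⟩ : ∃ k', k' ≠ k ∧ m < k' ∧ k' ≤ t ∧ e k' ⊆ H j := by
    rcases hkj with rfl | rfl
    · refine ⟨j - 1, by omega, by omega, by omega, ?_⟩
      simpa [show j - 1 + 1 = j by omega] using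
        hC.edge_subset_succ (k := j - 1) (by omega) (by omega)
    · exact ⟨k + 1, by omega, by omega, hjt, hC.edge_subset (by omega) hjt⟩
  obtain ⟨a, b, hab, habk'⟩ := Finset.card_eq_two.mp (hC.card_edge (by omega) hk't)
  rw [habk', Finset.pair_subset_iff] at hk'j
  refine hC.not_adj_of_eq_edge hmk' hk't habk'.symm (hadj a hk'j.1 b hk'j.2 hab ?_)
  rw [← Finset.pair_eq_pair_iff, ← habk', huvk]
  exact hC.edge_ne (by omega) hk't (by omega) hkt hk'k

theorem bootStep_adj_of_eq_edge_succ (hC : IsChainEdgeSeq r t H e) (hmt : m < t) (huv : u ≠ v)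
    (huvm : ({u, v} : Finset (Fin n)) = e (m + 1)) :
    (bootStep r (chainGraphUpTo t m H e)).Adj u v := by
  have hsub : {u, v} ⊆ H (m + 1) := huvm ▸ hC.edge_subset (by omega) hmt
  rw [Finset.pair_subset_iff] at hsub
  refine Or.inr ⟨huv, H (m + 1), hC.chain.1 (m + 1) (by omega) hmt, hsub.1, hsub.2, ?_⟩
  intro x hx y hy hxy hno
  rcases chainGraphUpTo_adj_or_eq_edge (m := m) (by omega) hmt hxy hx hy with
    h | ⟨k, hmk, hkt, hxyk⟩
  · exact h
  have hkm : m + 1 = k ∨ m + 1 = k + 1 := hC.eq_or_eq_succ_of_edge_subset (by omega) hkt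
    (by omega) hmt (hxyk ▸ Finset.pair_subset_iff.mpr ⟨hx, hy⟩)
  obtain rfl : k = m + 1 := by omega
  exact absurd (Finset.pair_eq_pair_iff.mp (hxyk.trans huvm.symm)) hno

theorem bootStep_chainGraphUpTo_of_lt (hC : IsChainEdgeSeq r t H e)
    (hgood : ¬ HasExternalKrMinus r t H) (hmt : m < t) :
    bootStep r (chainGraphUpTo t m H e) = chainGraphUpTo t (m + 1) H e := by
  ext u v
  constructor
  · intro h
    rcases hC.adj_or_eq_edge_succ_of_bootStep_adj hgood hmt.le h with
      (h | ⟨huv, k, hk, hkm, huvk⟩) | ⟨_, huvm⟩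
    · exact Or.inl h
    · exact Or.inr ⟨huv, k, hk, by omega, huvk⟩
    · exact Or.inr ⟨(bootStep r _).ne_of_adj h, m + 1, by omega, le_rfl, huvm⟩
  · rintro (h | ⟨huv, k, hk, hkm, huvk⟩)
    · exact Or.inl (Or.inl h)
    rcases hkm.eq_or_lt with rfl | hkm
    · exact hC.bootStep_adj_of_eq_edge_succ hmt huv huvk
    · exact Or.inl (Or.inr ⟨huv, k, hk, by omega, huvk⟩)

theorem bootStep_chainGraphUpTo_self (hC : IsChainEdgeSeq r t H e)
    (hgood : ¬ HasExternalKrMinus r t H) :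
    bootStep r (chainGraphUpTo t t H e) = chainGraphUpTo t t H e := by
  ext u v
  refine ⟨fun h => ?_, Or.inl⟩
  rcases hC.adj_or_eq_edge_succ_of_bootStep_adj hgood le_rfl h with h | ⟨htt, _⟩
  · exact h
  · exact absurd htt (lt_irrefl t)

theorem chainGraphUpTo_succ_ne (hC : IsChainEdgeSeq r t H e) (hmt : m < t) :
    chainGraphUpTo t (m + 1) H e ≠ chainGraphUpTo t m H e := by
  intro heq
  obtain ⟨a, b, hab, habm⟩ := Finset.card_eq_two.mp (hC.card_edge (by omega) hmt)
  have hadj : (chainGraphUpTo t (m + 1) H e).Adj a b :=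
    Or.inr ⟨hab, m + 1, by omega, le_rfl, habm.symm⟩
  exact hC.not_adj_of_eq_edge m.lt_succ_self hmt habm.symm (heq ▸ hadj)

theorem iterate_bootStep_chainGraph (hC : IsChainEdgeSeq r t H e)
    (hgood : ¬ HasExternalKrMinus r t H) {i : ℕ} (hit : i ≤ t) :
    (bootStep r)^[i] (chainGraph t H e) = chainGraphUpTo t i H e := by
  induction i with
  | zero => exact (chainGraphUpTo_zero t H e).symm
  | succ i ih =>
    rw [Function.iterate_succ_apply', ih (by omega)]
    exact hC.bootStep_chainGraphUpTo_of_lt hgood hit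

end IsChainEdgeSeq

theorem good_chain_process_general {n : ℕ} (r t : ℕ)
    (H e : ℕ → Finset (Fin n))
    (hchain : IsKrChain r t H)
    (hgood : ¬ HasExternalKrMinus r t H)
    (hmid : ∀ i, 1 ≤ i → i + 1 ≤ t → e i = H i ∩ H (i + 1))
    (het : (e t).card = 2 ∧ e t ⊆ H t ∧ e t ≠ e (t - 1)) :
    (∀ i ≤ t, (bootStep r)^[i] (chainGraph t H e) = chainGraphUpTo t i H e) ∧
    (bootStep r)^[t + 1] (chainGraph t H e) = (bootStep r)^[t] (chainGraph t H e) ∧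
    (∀ s, (bootStep r)^[s + 1] (chainGraph t H e) = (bootStep r)^[s] (chainGraph t H e) →
      t ≤ s) := by
  have hC : IsChainEdgeSeq r t H e := ⟨hchain, hmid, het.1, het.2.1, het.2.2⟩
  have hiter := fun i (hit : i ≤ t) => hC.iterate_bootStep_chainGraph hgood hit
  refine ⟨hiter, ?_, fun s hs => ?_⟩
  · rw [Function.iterate_succ_apply', hiter t le_rfl]
    exact hC.bootStep_chainGraphUpTo_self hgood
  · by_contra! hst
    rw [hiter (s + 1) hst, hiter s hst.le] at hs
    exact hC.chainGraphUpTo_succ_ne hst hs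

/-- Given a good `K_r`-chain `e 0, H 1, e 1, H 2, …, e (t-1), H t, e t` (where
`e i = H i ∩ H (i+1)` for `1 ≤ i ≤ t-1`, `e 0` is an edge of `H 1` other than `e 1` and
`e t` is an edge of `H t` other than `e (t-1)`), the `K_r`-bootstrap process starting from
`G₀ = (⋃ H i) - {e 1, …, e t}` satisfies `G_i = G₀ ∪ {e 1, …, e i}` for all `i ≤ t`;
in particular exactly one new edge is infected at each of the first `t` steps, and the
process stabilizes at time exactly `t`. -/
theorem good_chain_process {n : ℕ} (r t : ℕ) (hr : 4 ≤ r) (ht : 1 ≤ t)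
    (H e : ℕ → Finset (Fin n))
    (hchain : IsKrChain r t H)
    (hgood : ¬ HasExternalKrMinus r t H)
    (hmid : ∀ i, 1 ≤ i → i + 1 ≤ t → e i = H i ∩ H (i + 1))
    (he0 : (e 0).card = 2 ∧ e 0 ⊆ H 1 ∧ e 0 ≠ e 1)
    (het : (e t).card = 2 ∧ e t ⊆ H t ∧ e t ≠ e (t - 1)) :
    (∀ i ≤ t, (bootStep r)^[i] (chainGraph t H e) = chainGraphUpTo t i H e) ∧
    (bootStep r)^[t + 1] (chainGraph t H e) = (bootStep r)^[t] (chainGraph t H e) ∧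
    (∀ s, (bootStep r)^[s + 1] (chainGraph t H e) = (bootStep r)^[s] (chainGraph t H e) →
      t ≤ s) :=
  good_chain_process_general r t H e hchain hgood hmid het
end

section
/- Let r ≥ 5, let A be a set of r vertices, and let C = (S_1, …, S_k) be a minimal chain within A. Then α_r (b(C) − 1) ≤ c(C) − 2, where α_r = (r−2)/(C(r,2)−2). -/
/-- The cost `c(C)` of the chain `C = (S 0, …, S (k-1))`: `|S 0| + Σ_{i<k-1} |S (i+1) \ S i|`. -/
def chainCost {V : Type*} [DecidableEq V] (k : ℕ) (S : ℕ → Finset V) : ℕ :=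
  (S 0).card + ∑ i ∈ Finset.range (k - 1), (S (i + 1) \ S i).card

/-- The benefit `b(C)` of the chain `C = (S 0, …, S (k-1))`: the number of (unordered) pairs
of distinct vertices spanned by at least one of the sets `S i`. -/
def chainBenefit {V : Type*} [DecidableEq V] (k : ℕ) (S : ℕ → Finset V) : ℕ :=
  (((Finset.range k).biUnion fun i => (S i).sym2).filter fun p => ¬ p.IsDiag).card

/-- The number of off-diagonal pairs in `s.sym2` is `choose (card s) 2`. -/
lemma card_sym2_filter_not_isDiag {V : Type*} [DecidableEq V] (s : Finset V) :
    (s.sym2.filter fun p => ¬ p.IsDiag).card = s.card.choose 2 := by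
  rw [Finset.sym2_eq_image, Sym2.filter_image_mk_not_isDiag, Sym2.card_image_offDiag]

/-- Key polynomial inequality. -/
lemma key_ineq (r s : ℕ) (hr : 5 ≤ r) (hs2 : 2 ≤ s) (hsr : s ≤ r - 1) :
    ((r : ℝ) - 2) / ((r.choose 2 : ℝ) - 2) * ((s.choose 2 : ℝ) - 1) ≤ (s : ℝ) - 2 := by
  have hsr' : (s : ℝ) ≤ (r : ℝ) - 1 := by
    have : s + 1 ≤ r := by omega
    have := (Nat.cast_le (α := ℝ)).2 this
    push_cast at this; linarith
  have hs2' : (2 : ℝ) ≤ (s : ℝ) := by exact_mod_cast hs2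
  have hr' : (5 : ℝ) ≤ (r : ℝ) := by exact_mod_cast hr
  rw [Nat.cast_choose_two, Nat.cast_choose_two]
  have hden : (0 : ℝ) < (r : ℝ) * ((r : ℝ) - 1) / 2 - 2 := by nlinarith
  rw [div_mul_eq_mul_div, div_le_iff₀ hden]
  nlinarith [mul_nonneg (mul_nonneg (by linarith : (0:ℝ) ≤ (s:ℝ) - 2)
      (by linarith : (0:ℝ) ≤ (r:ℝ) - 2)) (by linarith : (0:ℝ) ≤ (r:ℝ) - 1 - (s:ℝ)),
    mul_nonneg (by linarith : (0:ℝ) ≤ (s:ℝ) - 2) (by linarith : (0:ℝ) ≤ (r:ℝ) - 4)]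

/-- Lemma: for `r ≥ 5`, if `A` is a set of `r` vertices and `C = (S 0, …, S (k-1))` is a
minimal chain within `A`, then `α_r (b(C) - 1) ≤ c(C) - 2`, where
`α_r = (r-2)/(C(r,2)-2)`. -/
theorem cost_benefit_chain {V : Type*} [DecidableEq V] (r : ℕ) (hr : 5 ≤ r)
    (A : Finset V) (hA : A.card = r) (k : ℕ) (hk : 1 ≤ k) (S : ℕ → Finset V)
    (hsub : ∀ i < k, S i ⊆ A)
    (hcard : ∀ i < k, 2 ≤ (S i).card ∧ (S i).card ≤ r - 1)
    (hconsec : ∀ i, i + 1 < k → (S i ∩ S (i + 1)).card ≤ 2)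
    (hmin : ∀ i < k, ∃ u ∈ S i, ∃ v ∈ S i, u ≠ v ∧
      ∀ j < k, j ≠ i → ¬(u ∈ S j ∧ v ∈ S j)) :
    ((r : ℝ) - 2) / ((r.choose 2 : ℝ) - 2) * ((chainBenefit k S : ℝ) - 1) ≤
      (chainCost k S : ℝ) - 2 := by
  set α : ℝ := ((r : ℝ) - 2) / ((r.choose 2 : ℝ) - 2) with hα
  have hr' : (5 : ℝ) ≤ (r : ℝ) := by exact_mod_cast hr
  have hq : (10 : ℕ) ≤ r.choose 2 := le_trans (by decide) (Nat.choose_le_choose 2 hr)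
  have hq' : (10 : ℝ) ≤ (r.choose 2 : ℝ) := by exact_mod_cast hq
  have hαpos : 0 ≤ α := by
    apply div_nonneg <;> linarith
  have hα1 : α ≤ 1 := by
    rw [hα, div_le_one (by linarith)]
    rw [Nat.cast_choose_two]
    nlinarith
  -- benefit as biUnion of filtered sym2s
  have hben : ∀ m, chainBenefit m S =
      ((Finset.range m).biUnion fun i => (S i).sym2.filter fun p => ¬ p.IsDiag).card := by
    intro m
    rw [chainBenefit, Finset.filter_biUnion]
  have main : ∀ m, 1 ≤ m → m ≤ k →
      α * ((chainBenefit m S : ℝ) - 1) ≤ (chainCost m S : ℝ) - 2 := by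
    intro m hm
    induction m, hm using Nat.le_induction with
    | base =>
      intro _
      have h0 := hcard 0 (by omega)
      have hb : chainBenefit 1 S = (S 0).card.choose 2 := by
        rw [hben, Finset.range_one, Finset.singleton_biUnion, card_sym2_filter_not_isDiag]
      have hc : chainCost 1 S = (S 0).card := by
        simp [chainCost]
      rw [hb, hc]
      exact key_ineq r (S 0).card hr h0.1 h0.2
    | succ n hn ih =>
      intro hnk
      have ih' := ih (by omega)
      obtain ⟨j, rfl⟩ : ∃ j, n = j + 1 := ⟨n - 1, by omega⟩
      have hj1k : j + 1 < k := by omega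
      have hcard1 := hcard (j + 1) hj1k
      -- cost recursion
      have hcost : chainCost (j + 2) S = chainCost (j + 1) S + (S (j + 1) \ S j).card := by
        rw [chainCost, chainCost]
        simp only [show j + 2 - 1 = j + 1 from rfl, show j + 1 - 1 = j from rfl]
        rw [Finset.sum_range_succ]
        ring
      -- benefit recursion
      set F : ℕ → Finset (Sym2 V) := fun i => (S i).sym2.filter fun p => ¬ p.IsDiag with hF
      set X : Finset (Sym2 V) := (Finset.range (j + 1)).biUnion F with hX
      set Q : Finset (Sym2 V) :=
        ((S j ∩ S (j + 1)).sym2.filter fun p => ¬ p.IsDiag) with hQ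
      have hQF : Q ⊆ F (j + 1) := by
        apply Finset.filter_subset_filter
        exact Finset.sym2_mono Finset.inter_subset_right
      have hQX : Q ⊆ X := by
        refine subset_trans ?_ (Finset.subset_biUnion_of_mem F (Finset.self_mem_range_succ j))
        apply Finset.filter_subset_filter
        exact Finset.sym2_mono Finset.inter_subset_left
      have hbsplit : chainBenefit (j + 2) S = (F (j + 1) \ X).card + chainBenefit (j + 1) S := by
        rw [hben, hben, Finset.range_add_one (n := j + 1), Finset.biUnion_insert,
          ← Finset.card_sdiff_add_card]
      have hFX : (F (j + 1) \ X).card ≤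
          (S (j + 1)).card.choose 2 - (S j ∩ S (j + 1)).card.choose 2 := by
        calc (F (j + 1) \ X).card ≤ (F (j + 1) \ Q).card :=
              Finset.card_le_card (Finset.sdiff_subset_sdiff (le_refl _) hQX)
          _ = (F (j + 1)).card - Q.card := Finset.card_sdiff_of_subset hQF
          _ = (S (j + 1)).card.choose 2 - (S j ∩ S (j + 1)).card.choose 2 := by
              rw [hF, hQ, card_sym2_filter_not_isDiag, card_sym2_filter_not_isDiag]
      -- notation
      set s : ℕ := (S (j + 1)).card with hs
      set t : ℕ := (S j ∩ S (j + 1)).card with ht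
      have ht2 : t ≤ 2 := hconsec j hj1k
      have hts : t ≤ s := Finset.card_le_card Finset.inter_subset_right
      have hd : (S (j + 1) \ S j).card = s - t := by
        have := Finset.card_sdiff_add_card_inter (S (j + 1)) (S j)
        rw [Finset.inter_comm] at this
        omega
      have hchoose_le : t.choose 2 ≤ s.choose 2 := Nat.choose_le_choose 2 hts
      -- real versions
      have hbreal : (chainBenefit (j + 2) S : ℝ) ≤
          (chainBenefit (j + 1) S : ℝ) + ((s.choose 2 : ℝ) - (t.choose 2 : ℝ)) := by
        rw [hbsplit]
        push_cast
        have : ((F (j + 1) \ X).card : ℝ) ≤ (s.choose 2 : ℝ) - (t.choose 2 : ℝ) := by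
          have := (Nat.cast_le (α := ℝ)).2 hFX
          rwa [Nat.cast_sub hchoose_le] at this
        linarith
      have hcreal : (chainCost (j + 2) S : ℝ) =
          (chainCost (j + 1) S : ℝ) + ((s : ℝ) - (t : ℝ)) := by
        rw [hcost, hd]
        push_cast [Nat.cast_sub hts]
        ring
      -- key step inequality
      have hkey : α * ((s.choose 2 : ℝ) - (t.choose 2 : ℝ)) ≤ (s : ℝ) - (t : ℝ) := by
        have h1 : α * ((s.choose 2 : ℝ) - 1) ≤ (s : ℝ) - 2 :=
          key_ineq r s hr hcard1.1 hcard1.2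
        have h2 : α * (1 - (t.choose 2 : ℝ)) ≤ 2 - (t : ℝ) := by
          interval_cases t <;> simp <;> linarith
        nlinarith
      nlinarith
  exact main k hk (le_refl k)
end

section
/- Let r ≥ 5, ε > 0, let n ≥ 1 be a real number and set T = n^{2 − α_r − ε} with α_r = (r−2)/(C(r,2)−2). Let 𝒞 be a minimal chain cover of an r-element vertex set A, consisting of ℓ ≥ 1 chains and having total cost c and total benefit b. Then T^ℓ · n^{−c} ≤ n^{−α_r b − ε}. -/
open Finset

theorem card_filter_not_isDiag_sym2 {α : Type*} [DecidableEq α] (s : Finset α) :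
    #{p ∈ s.sym2 | ¬p.IsDiag} = (#s).choose 2 := by
  rw [sym2_eq_image, Sym2.filter_image_mk_not_isDiag, Sym2.card_image_offDiag]

section Chain

variable {V : Type*} [DecidableEq V] (S : ℕ → Finset V)

theorem chainCost_one : chainCost 1 S = #(S 0) := by
  simp [chainCost]

theorem chainBenefit_one : chainBenefit 1 S = (#(S 0)).choose 2 := by
  rw [chainBenefit, range_one, singleton_biUnion, card_filter_not_isDiag_sym2]

theorem chainCost_add_two (k : ℕ) :
    chainCost (k + 2) S = chainCost (k + 1) S + #(S (k + 1) \ S k) := by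
  simp [chainCost, sum_range_succ, add_assoc]

theorem chainBenefit_add_two_add_choose_le (k : ℕ) :
    chainBenefit (k + 2) S + (#(S k ∩ S (k + 1))).choose 2 ≤
      chainBenefit (k + 1) S + (#(S (k + 1))).choose 2 := by
  rw [chainBenefit, chainBenefit, range_add_one (n := k + 1), biUnion_insert, filter_union]
  set P := {p ∈ (S (k + 1)).sym2 | ¬p.IsDiag}
  set B := {p ∈ (range (k + 1)).biUnion (fun i => (S i).sym2) | ¬p.IsDiag}
  have hPB : {p ∈ (S k ∩ S (k + 1)).sym2 | ¬p.IsDiag} ⊆ P ∩ B := by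
    intro p hp
    rw [mem_filter] at hp
    refine mem_inter.2 ⟨mem_filter.2 ⟨sym2_mono inter_subset_right hp.1, hp.2⟩,
      mem_filter.2 ⟨mem_biUnion.2 ⟨k, mem_range.2 k.lt_succ_self, ?_⟩, hp.2⟩⟩
    exact sym2_mono inter_subset_left hp.1
  have hshared := card_le_card hPB
  rw [card_filter_not_isDiag_sym2] at hshared
  have hP : #P = (#(S (k + 1))).choose 2 := card_filter_not_isDiag_sym2 _
  have hunion := card_union_add_card_inter P B
  omega

end Chain

def pairGain (α : ℝ) (s : ℕ) : ℝ := s - α * s.choose 2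

theorem le_chainCost_sub_mul_chainBenefit {V : Type*} [DecidableEq V] (S : ℕ → Finset V)
    {α : ℝ} (hα : 0 ≤ α) {k : ℕ} (hk : 1 ≤ k)
    (hgain : ∀ i < k, ∀ t ≤ 2, pairGain α t ≤ pairGain α #(S i))
    (hconsec : ∀ i, i + 1 < k → #(S i ∩ S (i + 1)) ≤ 2) :
    pairGain α 2 ≤ chainCost k S - α * chainBenefit k S := by
  induction k with
  | zero => omega
  | succ m ih =>
    rcases m with _ | p
    · rw [chainCost_one, chainBenefit_one]
      exact hgain 0 one_pos 2 le_rfl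
    have ih := ih (by omega) (fun i hi => hgain i (by omega)) (fun i hi => hconsec i (by omega))
    have hcost : (chainCost (p + 2) S : ℝ) + #(S p ∩ S (p + 1)) =
        chainCost (p + 1) S + #(S (p + 1)) := by
      rw [chainCost_add_two, ← card_sdiff_add_card_inter (S (p + 1)) (S p), inter_comm]
      push_cast
      ring
    have hbenefit : α * (chainBenefit (p + 2) S + (#(S p ∩ S (p + 1))).choose 2 : ℕ) ≤
        α * (chainBenefit (p + 1) S + (#(S (p + 1))).choose 2 : ℕ) :=
      mul_le_mul_of_nonneg_left (by exact_mod_cast chainBenefit_add_two_add_choose_le S p) hα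
    have hstep := hgain (p + 1) (by omega) _ (hconsec p (by omega))
    simp only [pairGain, Nat.cast_add] at hstep hbenefit ih ⊢
    linarith

theorem choose_two_sub_two_pos {r : ℕ} (hr : 4 ≤ r) : (0 : ℝ) < r.choose 2 - 2 := by
  have : (4 : ℝ) ≤ r := by exact_mod_cast hr
  rw [Nat.cast_choose_two]
  nlinarith

/-- With `D = C(r,2) - 2`, `D * pairGain α_r s - D * pairGain α_r 2` factors as
`(s - 2) ((r - 2)(r - 1 - s) + r - 4) / 2`. -/
theorem pairGain_le_pairGain {r s t : ℕ} (hr : 4 ≤ r) (ht : t ≤ 2) (hs : 2 ≤ s)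
    (hsr : s ≤ r - 1) :
    pairGain ((r - 2) / (r.choose 2 - 2)) t ≤ pairGain ((r - 2) / (r.choose 2 - 2)) s := by
  have hD := choose_two_sub_two_pos hr
  have hr' : (4 : ℝ) ≤ r := by exact_mod_cast hr
  have hs' : (2 : ℝ) ≤ s := by exact_mod_cast hs
  have hsr' : (s : ℝ) + 1 ≤ r := by exact_mod_cast (show s + 1 ≤ r by omega)
  have hscale (x : ℕ) : (r.choose 2 - 2 : ℝ) * pairGain ((r - 2) / (r.choose 2 - 2)) x =
      (r.choose 2 - 2) * x - (r - 2) * x.choose 2 := by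
    unfold pairGain
    field_simp
  refine le_of_mul_le_mul_left ?_ hD
  rw [hscale, hscale, Nat.cast_choose_two, Nat.cast_choose_two, Nat.cast_choose_two]
  interval_cases t <;> norm_num <;>
    nlinarith [mul_nonneg (mul_nonneg (sub_nonneg.2 hs') (sub_nonneg.2 hsr'))
        (by linarith : (0 : ℝ) ≤ r - 2),
      mul_nonneg (sub_nonneg.2 hs') (by linarith : (0 : ℝ) ≤ r - 4)]

theorem rpow_pow_mul_rpow_neg_le {n x c y : ℝ} {ℓ : ℕ} (hn : 1 ≤ n) (h : x * ℓ - c ≤ y) :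
    (n ^ x) ^ ℓ * n ^ (-c) ≤ n ^ y := by
  rw [← Real.rpow_natCast, ← Real.rpow_mul (by linarith), ← Real.rpow_add (by linarith)]
  exact Real.rpow_le_rpow_of_exponent_le hn (by linarith)

theorem cost_benefit_cover_general {V : Type*} [DecidableEq V] (r : ℕ) (hr : 5 ≤ r)
    (ε : ℝ) (hε : 0 < ε) (n : ℝ) (hn : 1 ≤ n)
    (ℓ : ℕ) (hℓ : 1 ≤ ℓ) (k : ℕ → ℕ) (S : ℕ → ℕ → Finset V)
    (hk : ∀ j < ℓ, 1 ≤ k j)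
    (hcard : ∀ j < ℓ, ∀ i < k j, 2 ≤ (S j i).card ∧ (S j i).card ≤ r - 1)
    (hconsec : ∀ j < ℓ, ∀ i, i + 1 < k j → (S j i ∩ S j (i + 1)).card ≤ 2) :
    (n ^ (2 - ((r : ℝ) - 2) / ((r.choose 2 : ℝ) - 2) - ε)) ^ ℓ *
        n ^ (-((∑ j ∈ Finset.range ℓ, chainCost (k j) (S j) : ℕ) : ℝ)) ≤
      n ^ (-(((r : ℝ) - 2) / ((r.choose 2 : ℝ) - 2) *
            ((∑ j ∈ Finset.range ℓ, chainBenefit (k j) (S j) : ℕ) : ℝ)) - ε) := by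
  set α : ℝ := (r - 2) / (r.choose 2 - 2)
  have hα : 0 ≤ α :=
    div_nonneg (sub_nonneg.2 (by exact_mod_cast (by omega : 2 ≤ r)))
      (choose_two_sub_two_pos (by omega)).le
  have hchain (j : ℕ) (hj : j ∈ range ℓ) :
      pairGain α 2 ≤ chainCost (k j) (S j) - α * chainBenefit (k j) (S j) := by
    rw [mem_range] at hj
    refine le_chainCost_sub_mul_chainBenefit (S j) hα (hk j hj) (fun i hi t ht => ?_)
      (hconsec j hj)
    exact pairGain_le_pairGain (by omega) ht (hcard j hj i hi).1 (hcard j hj i hi).2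
  have hcover := card_nsmul_le_sum _ _ _ hchain
  have hgain_two : pairGain α 2 = 2 - α := by norm_num [pairGain]
  rw [card_range, nsmul_eq_mul, sum_sub_distrib, ← mul_sum, hgain_two] at hcover
  have hε_le : ε ≤ ε * ℓ := le_mul_of_one_le_right hε.le (by exact_mod_cast hℓ)
  apply rpow_pow_mul_rpow_neg_le hn
  push_cast
  linarith

/-- Corollary: let `𝒞 = (C 0, …, C (ℓ-1))` be a minimal chain cover of an `r`-set `A`
(`r ≥ 5`), where the `j`-th chain is `S j 0, …, S j (k j - 1)`, with total cost `c` and total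
benefit `b`.  Then, for any real `n ≥ 1` and `ε > 0`, setting `T = n^(2 - α_r - ε)` where
`α_r = (r-2)/(C(r,2)-2)`, we have `T^ℓ · n^(-c) ≤ n^(-α_r b - ε)`. -/
theorem cost_benefit_cover {V : Type*} [DecidableEq V] (r : ℕ) (hr : 5 ≤ r)
    (ε : ℝ) (hε : 0 < ε) (n : ℝ) (hn : 1 ≤ n)
    (A : Finset V) (hA : A.card = r)
    (ℓ : ℕ) (hℓ : 1 ≤ ℓ) (k : ℕ → ℕ) (S : ℕ → ℕ → Finset V)
    (hk : ∀ j < ℓ, 1 ≤ k j)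
    (hsub : ∀ j < ℓ, ∀ i < k j, S j i ⊆ A)
    (hcard : ∀ j < ℓ, ∀ i < k j, 2 ≤ (S j i).card ∧ (S j i).card ≤ r - 1)
    (hconsec : ∀ j < ℓ, ∀ i, i + 1 < k j → (S j i ∩ S j (i + 1)).card ≤ 2)
    (hmin : ∀ j < ℓ, ∀ i < k j, ∃ u ∈ S j i, ∃ v ∈ S j i, u ≠ v ∧
      ∀ j' < ℓ, ∀ i' < k j', ¬(j' = j ∧ i' = i) → ¬(u ∈ S j' i' ∧ v ∈ S j' i')) :
    (n ^ (2 - ((r : ℝ) - 2) / ((r.choose 2 : ℝ) - 2) - ε)) ^ ℓ *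
        n ^ (-((∑ j ∈ Finset.range ℓ, chainCost (k j) (S j) : ℕ) : ℝ)) ≤
      n ^ (-(((r : ℝ) - 2) / ((r.choose 2 : ℝ) - 2) *
            ((∑ j ∈ Finset.range ℓ, chainBenefit (k j) (S j) : ℕ) : ℝ)) - ε) :=
  cost_benefit_cover_general r hr ε hε n hn ℓ hℓ k S hk hcard hconsec
end

section
/- For all sufficiently large n and every integer t ≤ n^{3/2}/200 there exist 5-element subsets A_1, …, A_t of [n] and distinct 2-element subsets e_0 = {1,2}, e_1, …, e_t of [n] such that: (1) e_i = A_i ∩ A_{i+1} for 1 ≤ i ≤ t−1; (2) |A_i ∩ A_j| ≤ 1 whenever |i − j| ≥ 2; (3) there are no distinct u, v, w ∈ [n] and indices 1 ≤ i < j < k ≤ t with {u,v} ⊆ A_i, {u,w} ⊆ A_j and {v,w} ⊆ A_k; and (4) every u ∈ [n] belongs to at most √n/20 of the sets A_i. -/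
open Finset

namespace DetAux

variable {n : ℕ}

def deg (m : ℕ) (A : ℕ → Finset (Fin n)) (u : Fin n) : ℕ :=
  ((Finset.Icc 1 m).filter (fun i => u ∈ A i)).card

def CoRes (m : ℕ) (A : ℕ → Finset (Fin n)) (y : Fin n) : Finset (Fin n) :=
  (Finset.Icc 1 m).biUnion (fun j => if y ∈ A j then A j else ∅)

def N2 (m : ℕ) (A : ℕ → Finset (Fin n)) (y : Fin n) : Finset (Fin n) :=
  (CoRes m A y).biUnion (CoRes m A)

lemma mem_CoRes_iff {m : ℕ} {A : ℕ → Finset (Fin n)} {y u : Fin n} :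
    u ∈ CoRes m A y ↔ ∃ j, 1 ≤ j ∧ j ≤ m ∧ y ∈ A j ∧ u ∈ A j := by
  unfold CoRes
  simp only [Finset.mem_biUnion, Finset.mem_Icc]
  constructor
  · rintro ⟨j, ⟨h1, h2⟩, hj⟩
    by_cases hy : y ∈ A j
    · rw [if_pos hy] at hj; exact ⟨j, h1, h2, hy, hj⟩
    · rw [if_neg hy] at hj; exact absurd hj (Finset.notMem_empty u)
  · rintro ⟨j, h1, h2, hy, hu⟩
    exact ⟨j, ⟨h1, h2⟩, by rw [if_pos hy]; exact hu⟩

lemma mem_CoRes (m : ℕ) (A : ℕ → Finset (Fin n)) {y u : Fin n} {j : ℕ}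
    (h1 : 1 ≤ j) (h2 : j ≤ m) (hy : y ∈ A j) (hu : u ∈ A j) : u ∈ CoRes m A y :=
  mem_CoRes_iff.2 ⟨j, h1, h2, hy, hu⟩

lemma CoRes_comm {m : ℕ} {A : ℕ → Finset (Fin n)} {y u : Fin n} :
    u ∈ CoRes m A y ↔ y ∈ CoRes m A u := by
  simp only [mem_CoRes_iff]
  constructor <;> rintro ⟨j, h1, h2, ha, hb⟩ <;> exact ⟨j, h1, h2, hb, ha⟩

lemma CoRes_subset_N2 {m : ℕ} {A : ℕ → Finset (Fin n)} {y : Fin n} :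
    CoRes m A y ⊆ N2 m A y := by
  intro u hu
  obtain ⟨j, h1, h2, hy, hu'⟩ := mem_CoRes_iff.1 hu
  exact Finset.mem_biUnion.2 ⟨u, hu, mem_CoRes m A h1 h2 hu' hu'⟩

lemma mem_N2_of {m : ℕ} {A : ℕ → Finset (Fin n)} {y u z : Fin n}
    (h1 : u ∈ CoRes m A y) (h2 : z ∈ CoRes m A u) : z ∈ N2 m A y :=
  Finset.mem_biUnion.2 ⟨u, h1, h2⟩

lemma N2_comm {m : ℕ} {A : ℕ → Finset (Fin n)} {y z : Fin n}
    (h : z ∈ N2 m A y) : y ∈ N2 m A z := by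
  obtain ⟨u, hu, hz⟩ := Finset.mem_biUnion.1 h
  exact mem_N2_of (CoRes_comm.1 hz) (CoRes_comm.1 hu)

lemma sum_deg (m : ℕ) (A : ℕ → Finset (Fin n))
    (h5 : ∀ i, 1 ≤ i → i ≤ m → (A i).card = 5) :
    (∑ u : Fin n, deg m A u) = 5 * m := by
  unfold deg
  simp only [Finset.card_filter]
  rw [Finset.sum_comm]
  have key : ∀ i ∈ Finset.Icc 1 m, (∑ u : Fin n, if u ∈ A i then 1 else 0) = 5 := by
    intro i hi
    rw [Finset.mem_Icc] at hi
    have h1 : (∑ u : Fin n, if u ∈ A i then 1 else 0)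
        = (Finset.univ.filter (fun u => u ∈ A i)).card := by
      rw [Finset.card_filter]
    rw [h1]
    have h2 : Finset.univ.filter (fun u => u ∈ A i) = A i := by
      ext x; simp
    rw [h2, h5 i hi.1 hi.2]
  rw [Finset.sum_congr rfl key]
  simp [Nat.card_Icc, mul_comm]

lemma card_CoRes_le (m K : ℕ) (A : ℕ → Finset (Fin n)) (y : Fin n)
    (h5 : ∀ i, 1 ≤ i → i ≤ m → (A i).card = 5) (hd : deg m A y ≤ K) :
    (CoRes m A y).card ≤ 5 * K := by
  unfold CoRes
  calc ((Finset.Icc 1 m).biUnion (fun j => if y ∈ A j then A j else ∅)).card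
      ≤ ∑ j ∈ Finset.Icc 1 m, (if y ∈ A j then A j else ∅).card := Finset.card_biUnion_le
    _ = ∑ j ∈ Finset.Icc 1 m, (if y ∈ A j then (A j).card else 0) := by
        apply Finset.sum_congr rfl; intro j hj; split <;> simp
    _ ≤ ∑ j ∈ Finset.Icc 1 m, (if y ∈ A j then 5 else 0) := by
        apply Finset.sum_le_sum; intro j hj
        rw [Finset.mem_Icc] at hj
        split
        · rw [h5 j hj.1 hj.2]
        · exact le_refl 0
    _ = 5 * deg m A y := by
        unfold deg
        rw [Finset.card_filter, Finset.mul_sum]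
        apply Finset.sum_congr rfl; intro j hj; split <;> simp
    _ ≤ 5 * K := by omega

lemma card_N2_le (m K : ℕ) (A : ℕ → Finset (Fin n)) (y : Fin n)
    (h5 : ∀ i, 1 ≤ i → i ≤ m → (A i).card = 5) (hd : ∀ u, deg m A u ≤ K) :
    (N2 m A y).card ≤ 25 * (K * K) := by
  unfold N2
  calc ((CoRes m A y).biUnion (CoRes m A)).card
      ≤ ∑ u ∈ CoRes m A y, (CoRes m A u).card := Finset.card_biUnion_le
    _ ≤ ∑ _u ∈ CoRes m A y, 5 * K := by
        apply Finset.sum_le_sum; intro u _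
        exact card_CoRes_le m K A u h5 (hd u)
    _ = (CoRes m A y).card * (5 * K) := by rw [Finset.sum_const, smul_eq_mul]
    _ ≤ (5 * K) * (5 * K) := by
        have := card_CoRes_le m K A y h5 (hd y)
        exact Nat.mul_le_mul_right _ this
    _ = 25 * (K * K) := by ring

structure Sys (n K m : ℕ) (A : ℕ → Finset (Fin n)) (e : ℕ → Finset (Fin n)) : Prop where
  card5 : ∀ i, 1 ≤ i → i ≤ m → (A i).card = 5
  ecard : ∀ i, 1 ≤ i → i ≤ m → (e i).card = 2
  esub : ∀ i, 1 ≤ i → i ≤ m → e i ⊆ A i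
  enext : ∀ i, 1 ≤ i → i + 1 ≤ m → e i = A i ∩ A (i + 1)
  far : ∀ i j, 1 ≤ i → j ≤ m → i + 2 ≤ j → (A i ∩ A j).card ≤ 1
  tri : ¬ ∃ (u v w : Fin n) (i j l : ℕ), u ≠ v ∧ u ≠ w ∧ v ≠ w ∧
          1 ≤ i ∧ i < j ∧ j < l ∧ l ≤ m ∧
          u ∈ A i ∧ v ∈ A i ∧ u ∈ A j ∧ w ∈ A j ∧ v ∈ A l ∧ w ∈ A l
  dle : ∀ u, deg m A u ≤ K
  laste : ∀ u ∈ e m, deg m A u ≤ K - 1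
  lastp : ∀ y ∈ e m, ∀ z ∈ e m, y ≠ z → ∀ j, 1 ≤ j → j < m → ¬ (y ∈ A j ∧ z ∈ A j)
  lasts : ∀ y ∈ e m, ∀ z ∈ e m, y ≠ z → ∀ u : Fin n, u ≠ y → u ≠ z →
          ∀ i j, 1 ≤ i → 1 ≤ j → i ≤ m → j ≤ m → i ≠ j →
          ¬ (u ∈ A i ∧ y ∈ A i ∧ u ∈ A j ∧ z ∈ A j)
  eonly : ∀ i, 1 ≤ i → i ≤ m → ∀ j, 1 ≤ j → j ≤ m → j ≠ i → j ≠ i + 1 → ¬ e i ⊆ A j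
  low : ∀ i, 1 ≤ i → i ≤ m → ∀ x ∈ A i, 1 < (x : ℕ)

lemma choose_out {F : Finset (Fin n)} (h : F.card < n) : ∃ x, x ∉ F := by
  by_contra hc
  push_neg at hc
  have hsub : (Finset.univ : Finset (Fin n)) ⊆ F := fun x _ => hc x
  have := Finset.card_le_card hsub
  rw [Finset.card_univ, Fintype.card_fin] at this
  omega

lemma extend (K m : ℕ) (A e : ℕ → Finset (Fin n)) (S : Sys n K m A e) (hm : 1 ≤ m)
    (hK : 450 ≤ K)
    (harith : ∀ B : ℕ, (K - 1) * B ≤ 5 * m → B + (100 * (K * K) + 6) < n) :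
    ∃ (A' e' : ℕ → Finset (Fin n)), Sys n K (m+1) A' e' := by
  classical
  have hn2 : 2 ≤ n := by have := harith 0 (by omega); omega
  -- the set of nearly-saturated vertices
  set Bad : Finset (Fin n) := Finset.univ.filter (fun u => K - 2 < deg m A u) with hBad
  have hBadcard : (K - 1) * Bad.card ≤ 5 * m := by
    have h1 : ∀ u ∈ Bad, K - 1 ≤ deg m A u := by
      intro u hu; simp only [hBad, Finset.mem_filter] at hu; omega
    calc (K - 1) * Bad.card = Bad.card • (K - 1) := by rw [smul_eq_mul]; ring
      _ ≤ ∑ u ∈ Bad, deg m A u := Finset.card_nsmul_le_sum Bad _ _ h1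
      _ ≤ ∑ u : Fin n, deg m A u :=
          Finset.sum_le_sum_of_subset (Finset.subset_univ Bad)
      _ = 5 * m := sum_deg m A S.card5
  have hmain : Bad.card + (100 * (K * K) + 6) < n := harith Bad.card hBadcard
  -- low-coordinate vertices
  set Low : Finset (Fin n) := Finset.univ.filter (fun x => (x : ℕ) ≤ 1) with hLow
  have hLowcard : Low.card ≤ 2 := by
    have hsub : Low ⊆ {(⟨0, by omega⟩ : Fin n), ⟨1, by omega⟩} := by
      intro x hx
      simp only [hLow, Finset.mem_filter] at hx
      have hx01 : (x : ℕ) = 0 ∨ (x : ℕ) = 1 := by omega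
      simp only [Finset.mem_insert, Finset.mem_singleton, Fin.ext_iff]
      exact hx01
    calc Low.card ≤ _ := Finset.card_le_card hsub
      _ ≤ 1 + 1 := Finset.card_insert_le _ _
      _ = 2 := rfl
  have hN2card : ∀ y, (N2 m A y).card ≤ 25 * (K * K) :=
    fun y => card_N2_le m K A y S.card5 S.dle
  have hem2 : (e m).card = 2 := S.ecard m hm le_rfl
  have hembiU : ((e m).biUnion (N2 m A)).card ≤ 50 * (K * K) := by
    calc ((e m).biUnion (N2 m A)).card ≤ ∑ y ∈ e m, (N2 m A y).card := Finset.card_biUnion_le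
      _ ≤ ∑ _y ∈ e m, 25 * (K * K) := Finset.sum_le_sum (fun y _ => hN2card y)
      _ = (e m).card * (25 * (K * K)) := by rw [Finset.sum_const, smul_eq_mul]
      _ = 50 * (K * K) := by rw [hem2]; ring
  -- choose x1
  set F1 : Finset (Fin n) := Bad ∪ (e m).biUnion (N2 m A) ∪ e m ∪ Low with hF1
  have hF1card : F1.card ≤ Bad.card + (50 * (K * K) + 4) := by
    rw [hF1]
    have c1 := Finset.card_union_le (Bad ∪ (e m).biUnion (N2 m A) ∪ e m) Low
    have c2 := Finset.card_union_le (Bad ∪ (e m).biUnion (N2 m A)) (e m)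
    have c3 := Finset.card_union_le Bad ((e m).biUnion (N2 m A))
    omega
  obtain ⟨x1, hx1⟩ := choose_out (F := F1) (by omega)
  -- choose x2
  set F2 : Finset (Fin n) := F1 ∪ N2 m A x1 ∪ {x1} with hF2
  have hF2card : F2.card ≤ Bad.card + (75 * (K * K) + 5) := by
    rw [hF2]
    have c1 := Finset.card_union_le (F1 ∪ N2 m A x1) ({x1} : Finset (Fin n))
    have c2 := Finset.card_union_le F1 (N2 m A x1)
    have c3 := hN2card x1
    have c4 : ({x1} : Finset (Fin n)).card = 1 := Finset.card_singleton x1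
    omega
  obtain ⟨x2, hx2⟩ := choose_out (F := F2) (by omega)
  -- choose x3
  set F3 : Finset (Fin n) := F2 ∪ N2 m A x2 ∪ {x2} with hF3
  have hF3card : F3.card ≤ Bad.card + (100 * (K * K) + 6) := by
    rw [hF3]
    have c1 := Finset.card_union_le (F2 ∪ N2 m A x2) ({x2} : Finset (Fin n))
    have c2 := Finset.card_union_le F2 (N2 m A x2)
    have c3 := hN2card x2
    have c4 : ({x2} : Finset (Fin n)).card = 1 := Finset.card_singleton x2
    omega
  obtain ⟨x3, hx3⟩ := choose_out (F := F3) (by omega)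
  -- unpack the non-membership facts
  have hx2F1 : x2 ∉ F1 := fun h => hx2 (by simp only [hF2]; exact Finset.mem_union_left _ (Finset.mem_union_left _ h))
  have hx3F2 : x3 ∉ F2 := fun h => hx3 (by simp only [hF3]; exact Finset.mem_union_left _ (Finset.mem_union_left _ h))
  have hx3F1 : x3 ∉ F1 := fun h => hx3F2 (by simp only [hF2]; exact Finset.mem_union_left _ (Finset.mem_union_left _ h))
  have hsplitF1 : ∀ x : Fin n, x ∉ F1 →
      x ∉ Bad ∧ (∀ y ∈ e m, x ∉ N2 m A y) ∧ x ∉ e m ∧ x ∉ Low := by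
    intro x hx
    simp only [hF1, Finset.mem_union, not_or, Finset.mem_biUnion, not_exists] at hx
    exact ⟨hx.1.1.1, fun y hy h => (hx.1.1.2) y ⟨hy, h⟩, hx.1.2, hx.2⟩
  obtain ⟨hx1Bad, hx1N2em, hx1em, hx1Low⟩ := hsplitF1 x1 hx1
  obtain ⟨hx2Bad, hx2N2em, hx2em, hx2Low⟩ := hsplitF1 x2 hx2F1
  obtain ⟨hx3Bad, hx3N2em, hx3em, hx3Low⟩ := hsplitF1 x3 hx3F1
  have hx2N2x1 : x2 ∉ N2 m A x1 := by
    intro h; exact hx2 (by simp only [hF2]; exact Finset.mem_union_left _ (Finset.mem_union_right _ h))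
  have hx2nex1 : x2 ≠ x1 := by
    intro h; apply hx2; simp only [hF2]; subst h
    exact Finset.mem_union_right _ (Finset.mem_singleton_self x2)
  have hx3N2x1 : x3 ∉ N2 m A x1 := by
    intro h; exact hx3F2 (by simp only [hF2]; exact Finset.mem_union_left _ (Finset.mem_union_right _ h))
  have hx3N2x2 : x3 ∉ N2 m A x2 := by
    intro h; exact hx3 (by simp only [hF3]; exact Finset.mem_union_left _ (Finset.mem_union_right _ h))
  have hx3nex1 : x3 ≠ x1 := by
    intro h; apply hx3F2; simp only [hF2]; subst h
    exact Finset.mem_union_right _ (Finset.mem_singleton_self x3)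
  have hx3nex2 : x3 ≠ x2 := by
    intro h; apply hx3; simp only [hF3]; subst h
    exact Finset.mem_union_right _ (Finset.mem_singleton_self x3)
  have hdegx : deg m A x1 ≤ K - 2 ∧ deg m A x2 ≤ K - 2 ∧ deg m A x3 ≤ K - 2 := by
    refine ⟨?_, ?_, ?_⟩ <;>
    · first
      | (have := hx1Bad; simp only [hBad, Finset.mem_filter, Finset.mem_univ, true_and,
          not_lt] at this; exact this)
      | (have := hx2Bad; simp only [hBad, Finset.mem_filter, Finset.mem_univ, true_and,
          not_lt] at this; exact this)
      | (have := hx3Bad; simp only [hBad, Finset.mem_filter, Finset.mem_univ, true_and,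
          not_lt] at this; exact this)
  obtain ⟨hdx1, hdx2, hdx3⟩ := hdegx
  -- names for the new sets
  set T : Finset (Fin n) := {x1, x2, x3} with hT
  set Anew : Finset (Fin n) := e m ∪ T with hAnew
  set A' : ℕ → Finset (Fin n) := fun i => if i = m + 1 then Anew else A i with hA'
  set e' : ℕ → Finset (Fin n) := fun i => if i = m + 1 then ({x2, x3} : Finset (Fin n)) else e i with he'
  have hA'old : ∀ i, i ≠ m + 1 → A' i = A i := by
    intro i hi; simp only [hA', if_neg hi]
  have hA'new : A' (m + 1) = Anew := by simp only [hA', if_pos rfl]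
  have he'old : ∀ i, i ≠ m + 1 → e' i = e i := by
    intro i hi; simp only [he', if_neg hi]
  have he'new : e' (m + 1) = ({x2, x3} : Finset (Fin n)) := by simp only [he', if_pos rfl]
  have hmemAnew : ∀ y : Fin n, y ∈ Anew ↔ (y ∈ e m ∨ y = x1 ∨ y = x2 ∨ y = x3) := by
    intro y
    simp only [hAnew, hT, Finset.mem_union, Finset.mem_insert, Finset.mem_singleton]
  have hemAnew : ∀ y ∈ e m, y ∈ Anew := fun y hy => (hmemAnew y).2 (Or.inl hy)
  have hx1Anew : x1 ∈ Anew := (hmemAnew x1).2 (Or.inr (Or.inl rfl))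
  have hx2Anew : x2 ∈ Anew := (hmemAnew x2).2 (Or.inr (Or.inr (Or.inl rfl)))
  have hx3Anew : x3 ∈ Anew := (hmemAnew x3).2 (Or.inr (Or.inr (Or.inr rfl)))
  have hTcard : T.card = 3 := by
    rw [hT]
    rw [Finset.card_insert_of_notMem (by
      simp only [Finset.mem_insert, Finset.mem_singleton]
      push_neg
      exact ⟨fun h => hx2nex1 h.symm, fun h => hx3nex1 h.symm⟩)]
    rw [Finset.card_insert_of_notMem (by
      simp only [Finset.mem_singleton]
      exact fun h => hx3nex2 h.symm)]
    rw [Finset.card_singleton]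
  have hAnewcard : Anew.card = 5 := by
    rw [hAnew, Finset.card_union_of_disjoint, hem2, hTcard]
    rw [Finset.disjoint_left]
    intro a ha hamem
    rw [hT] at hamem
    simp only [Finset.mem_insert, Finset.mem_singleton] at hamem
    rcases hamem with h|h|h <;> subst h
    · exact hx1em ha
    · exact hx2em ha
    · exact hx3em ha
  -- THE central blocker: no two distinct members of Anew, not both in e m,
  -- are linked in the square graph N2
  have hnopair : ∀ y z : Fin n, y ∈ Anew → z ∈ Anew → ¬(y ∈ e m ∧ z ∈ e m) → y ≠ z →
      z ∉ N2 m A y := by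
    intro y z hy hz hboth hyz hmem
    rcases (hmemAnew y).1 hy with hy1 | hy1 | hy1 | hy1 <;>
      rcases (hmemAnew z).1 hz with hz1 | hz1 | hz1 | hz1
    · exact hboth ⟨hy1, hz1⟩
    · subst hz1; exact hx1N2em y hy1 hmem
    · subst hz1; exact hx2N2em y hy1 hmem
    · subst hz1; exact hx3N2em y hy1 hmem
    · subst hy1; exact hx1N2em z hz1 (N2_comm hmem)
    · subst hy1; subst hz1; exact hyz rfl
    · subst hy1; subst hz1; exact hx2N2x1 hmem
    · subst hy1; subst hz1; exact hx3N2x1 hmem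
    · subst hy1; exact hx2N2em z hz1 (N2_comm hmem)
    · subst hy1; subst hz1; exact hx2N2x1 (N2_comm hmem)
    · subst hy1; subst hz1; exact hyz rfl
    · subst hy1; subst hz1; exact hx3N2x2 hmem
    · subst hy1; exact hx3N2em z hz1 (N2_comm hmem)
    · subst hy1; subst hz1; exact hx3N2x1 (N2_comm hmem)
    · subst hy1; subst hz1; exact hx3N2x2 (N2_comm hmem)
    · subst hy1; subst hz1; exact hyz rfl
  have hnocores : ∀ y z : Fin n, y ∈ Anew → z ∈ Anew → ¬(y ∈ e m ∧ z ∈ e m) → y ≠ z →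
      ∀ j, 1 ≤ j → j ≤ m → ¬(y ∈ A j ∧ z ∈ A j) := by
    intro y z hy hz hboth hyz j hj1 hj2 ⟨hyA, hzA⟩
    exact hnopair y z hy hz hboth hyz (CoRes_subset_N2 (mem_CoRes m A hj1 hj2 hyA hzA))
  obtain ⟨b0, hb0⟩ : (e m).Nonempty := by
    rw [← Finset.card_pos, hem2]; omega
  have hb0A : b0 ∈ A m := S.esub m hm le_rfl hb0
  have hxnotem : ∀ z : Fin n, (z = x1 ∨ z = x2 ∨ z = x3) → z ∉ e m := by
    rintro z (h|h|h) <;> subst h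
    · exact hx1em
    · exact hx2em
    · exact hx3em
  have hxnotAm : ∀ z : Fin n, (z = x1 ∨ z = x2 ∨ z = x3) → z ∉ A m := by
    intro z hzT hzA
    have hzem : z ∉ e m := hxnotem z hzT
    have hzAnew : z ∈ Anew := by
      rcases hzT with h|h|h <;> subst h
      · exact hx1Anew
      · exact hx2Anew
      · exact hx3Anew
    exact hnocores b0 z (hemAnew b0 hb0) hzAnew (fun h => hzem h.2)
      (fun h => hzem (h ▸ hb0)) m hm le_rfl ⟨hb0A, hzA⟩
  -- intersection of the new set with A m is exactly e m
  have hAmAnew : A m ∩ Anew = e m := by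
    ext y
    simp only [Finset.mem_inter]
    constructor
    · rintro ⟨hyAm, hyAnew⟩
      rcases (hmemAnew y).1 hyAnew with h | h | h | h
      · exact h
      · exact absurd hyAm (hxnotAm y (Or.inl h))
      · exact absurd hyAm (hxnotAm y (Or.inr (Or.inl h)))
      · exact absurd hyAm (hxnotAm y (Or.inr (Or.inr h)))
    · intro hy
      exact ⟨S.esub m hm le_rfl hy, hemAnew y hy⟩
  -- the new degree
  have hdeg' : ∀ u : Fin n,
      deg (m + 1) A' u = deg m A u + (if u ∈ Anew then 1 else 0) := by
    intro u
    unfold deg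
    have hIcc : Finset.Icc 1 (m + 1) = insert (m + 1) (Finset.Icc 1 m) := by
      ext k
      simp only [Finset.mem_Icc, Finset.mem_insert]
      omega
    have hfe : (Finset.Icc 1 m).filter (fun i => u ∈ A' i)
        = (Finset.Icc 1 m).filter (fun i => u ∈ A i) := by
      apply Finset.filter_congr
      intro i hi
      rw [Finset.mem_Icc] at hi
      rw [hA'old i (by omega)]
    rw [hIcc, Finset.filter_insert]
    by_cases hu : u ∈ Anew
    · rw [if_pos (by rw [hA'new]; exact hu)]
      rw [Finset.card_insert_of_notMem (by
        simp only [Finset.mem_filter, Finset.mem_Icc]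
        push_neg
        intro h
        omega)]
      rw [hfe, if_pos hu]
    · rw [if_neg (by rw [hA'new]; exact hu)]
      rw [hfe, if_neg hu]
      omega
  have hx23 : ∀ u : Fin n, u ∈ ({x2, x3} : Finset (Fin n)) ↔ (u = x2 ∨ u = x3) := by
    intro u
    simp only [Finset.mem_insert, Finset.mem_singleton]
  -- now build the new system
  refine ⟨A', e', ?_, ?_, ?_, ?_, ?_, ?_, ?_, ?_, ?_, ?_, ?_, ?_⟩
  · -- card5
    intro i h1 h2
    by_cases hi : i = m + 1
    · subst hi; rw [hA'new]; exact hAnewcard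
    · rw [hA'old i hi]; exact S.card5 i h1 (by omega)
  · -- ecard
    intro i h1 h2
    by_cases hi : i = m + 1
    · subst hi; rw [he'new]; exact Finset.card_pair (fun h => hx3nex2 h.symm)
    · rw [he'old i hi]; exact S.ecard i h1 (by omega)
  · -- esub
    intro i h1 h2
    by_cases hi : i = m + 1
    · subst hi
      rw [he'new, hA'new]
      intro y hy
      rcases (hx23 y).1 hy with h | h <;> subst h
      · exact hx2Anew
      · exact hx3Anew
    · rw [he'old i hi, hA'old i hi]; exact S.esub i h1 (by omega)
  · -- enext
    intro i h1 h2
    by_cases hi : i = m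
    · rw [hi]
      rw [he'old m (by omega), hA'old m (by omega), hA'new, hAmAnew]
    · rw [he'old i (by omega), hA'old i (by omega), hA'old (i + 1) (by omega)]
      exact S.enext i h1 (by omega)
  · -- far
    intro i j h1 h2 h3
    by_cases hj : j = m + 1
    · subst hj
      rw [hA'old i (by omega), hA'new]
      by_contra hcon
      push_neg at hcon
      obtain ⟨y, hy, z, hz, hyz⟩ := Finset.one_lt_card.1 hcon
      rw [Finset.mem_inter] at hy hz
      by_cases hboth : y ∈ e m ∧ z ∈ e m
      · exact S.lastp y hboth.1 z hboth.2 hyz i h1 (by omega) ⟨hy.1, hz.1⟩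
      · exact hnocores y z hy.2 hz.2 hboth hyz i h1 (by omega) ⟨hy.1, hz.1⟩
    · rw [hA'old i (by omega), hA'old j hj]
      exact S.far i j h1 (by omega) h3
  · -- tri
    rintro ⟨u, v, w, i, j, l, huv, huw, hvw, hi, hij, hjl, hl, m1, m2, m3, m4, m5, m6⟩
    by_cases hlm : l ≤ m
    · rw [hA'old i (by omega)] at m1 m2
      rw [hA'old j (by omega)] at m3 m4
      rw [hA'old l (by omega)] at m5 m6
      exact S.tri ⟨u, v, w, i, j, l, huv, huw, hvw, hi, hij, hjl, hlm, m1, m2, m3, m4, m5, m6⟩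
    · have hlm1 : l = m + 1 := by omega
      subst hlm1
      rw [hA'old i (by omega)] at m1 m2
      rw [hA'old j (by omega)] at m3 m4
      rw [hA'new] at m5 m6
      by_cases hboth : v ∈ e m ∧ w ∈ e m
      · exact S.lasts v hboth.1 w hboth.2 hvw u huv huw i j hi (by omega) (by omega)
          (by omega) (by omega) ⟨m1, m2, m3, m4⟩
      · have hu_cores : u ∈ CoRes m A v := mem_CoRes m A hi (by omega) m2 m1
        have hw_cores : w ∈ CoRes m A u := mem_CoRes m A (by omega) (by omega) m3 m4
        exact hnopair v w m5 m6 hboth hvw (mem_N2_of hu_cores hw_cores)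
  · -- dle
    intro u
    rw [hdeg' u]
    by_cases hu : u ∈ Anew
    · rw [if_pos hu]
      rcases (hmemAnew u).1 hu with h | h | h | h
      · have h2 := S.laste u h
        omega
      · subst h; omega
      · subst h; omega
      · subst h; omega
    · rw [if_neg hu]
      have := S.dle u
      omega
  · -- laste
    intro u hu
    rw [he'new] at hu
    rw [hdeg' u]
    rcases (hx23 u).1 hu with h | h <;> subst h
    · rw [if_pos hx2Anew]; omega
    · rw [if_pos hx3Anew]; omega
  · -- lastp
    intro y hy z hz hyz j h1 h2
    rw [he'new] at hy hz
    rw [hA'old j (by omega)]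
    rintro ⟨hyA, hzA⟩
    have hzc : z ∈ CoRes m A y := mem_CoRes m A h1 (by omega) hyA hzA
    have hzn : z ∈ N2 m A y := CoRes_subset_N2 hzc
    rcases (hx23 y).1 hy with h | h <;> rcases (hx23 z).1 hz with h' | h' <;>
      subst h <;> subst h'
    · exact hyz rfl
    · exact hx3N2x2 hzn
    · exact hx3N2x2 (N2_comm hzn)
    · exact hyz rfl
  · -- lasts
    intro y hy z hz hyz u huy huz i j hi1 hj1 hi2 hj2 hij
    rw [he'new] at hy hz
    rintro ⟨c1, c2, c3, c4⟩
    have hyAnew : y ∈ Anew := by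
      rcases (hx23 y).1 hy with h | h <;> subst h
      · exact hx2Anew
      · exact hx3Anew
    have hzAnew : z ∈ Anew := by
      rcases (hx23 z).1 hz with h | h <;> subst h
      · exact hx2Anew
      · exact hx3Anew
    have hyem : y ∉ e m := by
      rcases (hx23 y).1 hy with h | h <;> subst h
      · exact hx2em
      · exact hx3em
    have hzem : z ∉ e m := by
      rcases (hx23 z).1 hz with h | h <;> subst h
      · exact hx2em
      · exact hx3em
    by_cases hi : i = m + 1
    · -- then j ≤ m; pair (u, z) co-resides in A j
      subst hi
      have hjm : j ≤ m := by omega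
      rw [hA'new] at c1
      rw [hA'old j (by omega)] at c3 c4
      exact hnocores u z c1 hzAnew (fun h => hzem h.2) huz j hj1 hjm ⟨c3, c4⟩
    · by_cases hj : j = m + 1
      · subst hj
        have him : i ≤ m := by omega
        rw [hA'new] at c3
        rw [hA'old i (by omega)] at c1 c2
        exact hnocores u y c3 hyAnew (fun h => hyem h.2) huy i hi1 him ⟨c1, c2⟩
      · rw [hA'old i hi] at c1 c2
        rw [hA'old j hj] at c3 c4
        have hu_cores : u ∈ CoRes m A y := mem_CoRes m A hi1 (by omega) c2 c1
        have hz_cores : z ∈ CoRes m A u := mem_CoRes m A hj1 (by omega) c3 c4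
        have hzn : z ∈ N2 m A y := mem_N2_of hu_cores hz_cores
        rcases (hx23 y).1 hy with h | h <;> rcases (hx23 z).1 hz with h' | h' <;>
          subst h <;> subst h'
        · exact hyz rfl
        · exact hx3N2x2 hzn
        · exact hx3N2x2 (N2_comm hzn)
        · exact hyz rfl
  · -- eonly
    intro i h1 h2 j hj1 hj2 hji hji1
    by_cases hi : i = m + 1
    · subst hi
      rw [he'new, hA'old j (by omega)]
      intro hsub
      have c2 : x2 ∈ A j := hsub ((hx23 x2).2 (Or.inl rfl))
      have c3 : x3 ∈ A j := hsub ((hx23 x3).2 (Or.inr rfl))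
      exact hx3N2x2 (CoRes_subset_N2 (mem_CoRes m A hj1 (by omega) c2 c3))
    · rw [he'old i hi]
      by_cases hj : j = m + 1
      · subst hj
        rw [hA'new]
        have him : i < m := by omega
        intro hsub
        obtain ⟨y, z, hyz, hei⟩ := Finset.card_eq_two.1 (S.ecard i h1 (by omega))
        have hyAi : y ∈ A i := S.esub i h1 (by omega) (by rw [hei]; exact Finset.mem_insert_self y {z})
        have hzAi : z ∈ A i := S.esub i h1 (by omega) (by
          rw [hei]; exact Finset.mem_insert_of_mem (Finset.mem_singleton_self z))
        have hyAnew : y ∈ Anew := hsub (by rw [hei]; exact Finset.mem_insert_self y {z})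
        have hzAnew : z ∈ Anew := hsub (by
          rw [hei]; exact Finset.mem_insert_of_mem (Finset.mem_singleton_self z))
        by_cases hboth : y ∈ e m ∧ z ∈ e m
        · exact S.lastp y hboth.1 z hboth.2 hyz i h1 him ⟨hyAi, hzAi⟩
        · exact hnocores y z hyAnew hzAnew hboth hyz i h1 (by omega) ⟨hyAi, hzAi⟩
      · rw [hA'old j hj]
        exact S.eonly i h1 (by omega) j hj1 (by omega) hji hji1
  · -- low
    intro i h1 h2 x hx
    by_cases hi : i = m + 1
    · subst hi
      rw [hA'new] at hx
      rcases (hmemAnew x).1 hx with h | h | h | h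
      · exact S.low m hm le_rfl x (S.esub m hm le_rfl h)
      · subst h
        have := hx1Low
        simp only [hLow, Finset.mem_filter, Finset.mem_univ, true_and, not_le] at this
        omega
      · subst h
        have := hx2Low
        simp only [hLow, Finset.mem_filter, Finset.mem_univ, true_and, not_le] at this
        omega
      · subst h
        have := hx3Low
        simp only [hLow, Finset.mem_filter, Finset.mem_univ, true_and, not_le] at this
        omega
    · rw [hA'old i hi] at hx
      exact S.low i h1 (by omega) x hx


/-- Base case: the system with one set. -/
lemma base (K : ℕ) (hK : 450 ≤ K) (hn : 7 ≤ n) :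
    ∃ (A : ℕ → Finset (Fin n)) (e : ℕ → Finset (Fin n)), Sys n K 1 A e := by
  have h2 : 2 < n := by omega
  have h3 : 3 < n := by omega
  have h4 : 4 < n := by omega
  have h5 : 5 < n := by omega
  have h6 : 6 < n := by omega
  set v2 : Fin n := ⟨2, h2⟩
  set v3 : Fin n := ⟨3, h3⟩
  set v4 : Fin n := ⟨4, h4⟩
  set v5 : Fin n := ⟨5, h5⟩
  set v6 : Fin n := ⟨6, h6⟩
  set S : Finset (Fin n) := {v2, v3, v4, v5, v6} with hS
  have hmem : ∀ x ∈ S, 1 < (x : ℕ) := by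
    intro x hx
    simp only [hS, Finset.mem_insert, Finset.mem_singleton] at hx
    rcases hx with h|h|h|h|h <;> subst h <;> simp [v2, v3, v4, v5, v6]
  have hScard : S.card = 5 := by
    simp only [hS]
    rw [Finset.card_insert_of_notMem, Finset.card_insert_of_notMem,
        Finset.card_insert_of_notMem, Finset.card_insert_of_notMem,
        Finset.card_singleton] <;>
      simp [v2, v3, v4, v5, v6, Fin.ext_iff]
  refine ⟨fun i => if i = 1 then S else ∅, fun i => if i = 1 then ({v5, v6} : Finset (Fin n)) else ∅, ?_⟩
  have hA1 : ∀ i, 1 ≤ i → i ≤ 1 → i = 1 := by omega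
  constructor
  · intro i h1 h2'
    rw [hA1 i h1 h2', if_pos rfl]; exact hScard
  · intro i h1 h2'
    rw [hA1 i h1 h2', if_pos rfl]
    exact Finset.card_pair (by simp [v5, v6, Fin.ext_iff])
  · intro i h1 h2'
    have hi := hA1 i h1 h2'; subst hi
    intro x hx
    simp only [if_pos rfl] at hx ⊢
    simp only [hS, Finset.mem_insert, Finset.mem_singleton] at hx ⊢
    tauto
  · intro i h1 h2'; omega
  · intro i j h1 h2' h3'; omega
  · rintro ⟨u, v, w, i, j, l, _, _, _, hi, hij, hjl, hl, _⟩; omega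
  · intro u
    unfold deg
    have : Finset.Icc 1 1 = {1} := rfl
    rw [this]
    calc (({1} : Finset ℕ).filter (fun i => u ∈ if i = 1 then S else ∅)).card
        ≤ ({1} : Finset ℕ).card := Finset.card_filter_le _ _
      _ = 1 := Finset.card_singleton 1
      _ ≤ K := by omega
  · intro u _
    unfold deg
    have : Finset.Icc 1 1 = {1} := rfl
    rw [this]
    calc (({1} : Finset ℕ).filter (fun i => u ∈ if i = 1 then S else ∅)).card
        ≤ 1 := by
          calc _ ≤ ({1} : Finset ℕ).card := Finset.card_filter_le _ _
            _ = 1 := Finset.card_singleton 1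
      _ ≤ K - 1 := by omega
  · intro y _ z _ _ j h1 h2'; omega
  · intro y _ z _ _ u _ _ i j h1 h1' hi hj hij; omega
  · intro i h1 h2' j h1' h2'' hji hji1; omega
  · intro i h1 h2' x hx
    rw [hA1 i h1 h2'] at hx
    simp only [if_pos rfl] at hx
    exact hmem x hx




lemma sqrt_facts {n : ℕ} (hn : 10 ^ 9 ≤ n) :
    ((Nat.sqrt n : ℝ) ≤ Real.sqrt n) ∧ (Real.sqrt n < (Nat.sqrt n : ℝ) + 1) ∧
    ((840 : ℝ) ≤ Real.sqrt n) ∧ ((n : ℝ) ^ (3/2 : ℝ) = n * Real.sqrt n) := by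
  have hn0 : (0:ℝ) < n := by
    have : (0:ℕ) < n := by omega
    exact_mod_cast this
  have h1 : Nat.sqrt n * Nat.sqrt n ≤ n := by
    have := Nat.sqrt_le' n; nlinarith
  have h2 : n < (Nat.sqrt n + 1) * (Nat.sqrt n + 1) := by
    have := Nat.lt_succ_sqrt' n; nlinarith
  have c1 : ((Nat.sqrt n : ℝ)) * (Nat.sqrt n : ℝ) ≤ (n : ℝ) := by exact_mod_cast h1
  have c2 : (n : ℝ) < ((Nat.sqrt n : ℝ) + 1) * ((Nat.sqrt n : ℝ) + 1) := by exact_mod_cast h2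
  have f1 : (Nat.sqrt n : ℝ) ≤ Real.sqrt n := by
    rw [show ((Nat.sqrt n : ℝ)) = Real.sqrt ((Nat.sqrt n : ℝ) ^ 2) from
      (Real.sqrt_sq (by positivity)).symm]
    apply Real.sqrt_le_sqrt
    nlinarith
  have f2 : Real.sqrt n < (Nat.sqrt n : ℝ) + 1 := by
    rw [show ((Nat.sqrt n : ℝ) + 1) = Real.sqrt (((Nat.sqrt n : ℝ) + 1) ^ 2) from
      (Real.sqrt_sq (by positivity)).symm]
    apply Real.sqrt_lt_sqrt (by positivity)
    nlinarith
  have f3 : (840 : ℝ) ≤ Real.sqrt n := by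
    have : (840 : ℕ) ≤ Nat.sqrt n := by
      rw [Nat.le_sqrt]
      omega
    have : (840 : ℝ) ≤ (Nat.sqrt n : ℝ) := by exact_mod_cast this
    linarith
  have f4 : (n : ℝ) ^ (3/2 : ℝ) = n * Real.sqrt n := by
    rw [show (3/2 : ℝ) = 1 + 1/2 by norm_num, Real.rpow_add hn0, Real.rpow_one,
      Real.sqrt_eq_rpow]
  exact ⟨f1, f2, f3, f4⟩

lemma K_le {n : ℕ} (hn : 10 ^ 9 ≤ n) :
    ((Nat.sqrt n / 20 : ℕ) : ℝ) ≤ Real.sqrt n / 20 := by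
  obtain ⟨f1, _, _, _⟩ := sqrt_facts hn
  calc ((Nat.sqrt n / 20 : ℕ) : ℝ) ≤ (Nat.sqrt n : ℝ) / 20 := Nat.cast_div_le
    _ ≤ Real.sqrt n / 20 := by linarith

lemma K_big {n : ℕ} (hn : 10 ^ 9 ≤ n) : 450 ≤ Nat.sqrt n / 20 := by
  have : (9000 : ℕ) ≤ Nat.sqrt n := by
    rw [Nat.le_sqrt]
    omega
  omega

lemma arith {n t m : ℕ} (hn : 10 ^ 9 ≤ n)
    (ht : (t : ℝ) ≤ (n : ℝ) ^ (3/2 : ℝ) / 200) (hm : m < t) :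
    ∀ B : ℕ, (Nat.sqrt n / 20 - 1) * B ≤ 5 * m →
      B + (100 * ((Nat.sqrt n / 20) * (Nat.sqrt n / 20)) + 6) < n := by
  intro B hB
  set K : ℕ := Nat.sqrt n / 20 with hKdef
  obtain ⟨f1, f2, f3, f4⟩ := sqrt_facts hn
  have hK450 : 450 ≤ K := K_big hn
  have hKle : (K : ℝ) ≤ Real.sqrt n / 20 := K_le hn
  have hsq : Real.sqrt n * Real.sqrt n = n := Real.mul_self_sqrt (by positivity)
  -- lower bound for K - 1
  have hdm : Nat.sqrt n = 20 * K + Nat.sqrt n % 20 := by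
    rw [hKdef]; omega
  have hmod : Nat.sqrt n % 20 ≤ 19 := by omega
  have hKge' : (Nat.sqrt n : ℝ) ≤ 20 * K + 19 := by
    have : Nat.sqrt n ≤ 20 * K + 19 := by omega
    exact_mod_cast this
  have hKge : Real.sqrt n / 21 ≤ (K : ℝ) - 1 := by
    have h1 : Real.sqrt n < 20 * (K:ℝ) + 20 := by linarith
    -- K - 1 ≥ √n/20 - 2 ≥ √n/21 since √n ≥ 840
    nlinarith [f3]
  -- bound B
  have hcast : ((K - 1 : ℕ) : ℝ) = (K : ℝ) - 1 := by
    have : 1 ≤ K := by omega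
    push_cast [Nat.cast_sub this]
    ring
  have hBr : ((K : ℝ) - 1) * B ≤ 5 * m := by
    rw [← hcast]
    exact_mod_cast hB
  have hmt : (m : ℝ) ≤ (t : ℝ) - 1 := by
    have : m + 1 ≤ t := hm
    have := (Nat.cast_le (α := ℝ)).2 this
    push_cast at this
    linarith
  have h5t : (5 : ℝ) * m ≤ (n : ℝ) * Real.sqrt n / 40 := by
    have : (5 : ℝ) * t ≤ 5 * ((n : ℝ) ^ (3/2 : ℝ) / 200) := by linarith
    rw [f4] at this
    linarith
  have hsqrtpos : (0:ℝ) < Real.sqrt n := by linarith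
  have hBbound : (B : ℝ) ≤ 21 * n / 40 := by
    have h1 : (B : ℝ) * (Real.sqrt n / 21) ≤ (n : ℝ) * Real.sqrt n / 40 := by
      calc (B : ℝ) * (Real.sqrt n / 21) ≤ (B : ℝ) * ((K : ℝ) - 1) := by
            apply mul_le_mul_of_nonneg_left hKge (by positivity)
        _ = ((K : ℝ) - 1) * B := by ring
        _ ≤ 5 * m := hBr
        _ ≤ (n : ℝ) * Real.sqrt n / 40 := h5t
    have h2 : (B : ℝ) * Real.sqrt n ≤ 21 * ((n : ℝ) * Real.sqrt n) / 40 := by linarith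
    have h3 : (B : ℝ) ≤ 21 * ((n : ℝ) * Real.sqrt n) / 40 / Real.sqrt n :=
      (le_div_iff₀ hsqrtpos).2 h2
    have h4 : 21 * ((n : ℝ) * Real.sqrt n) / 40 / Real.sqrt n = 21 * n / 40 := by
      field_simp
    linarith [h4 ▸ h3]
  have hKsq : (100 : ℝ) * ((K:ℝ) * (K:ℝ)) ≤ (n : ℝ) / 4 := by
    have h1 : (K : ℝ) * (K : ℝ) ≤ (Real.sqrt n / 20) * (Real.sqrt n / 20) := by
      apply mul_le_mul hKle hKle (by positivity) (by positivity)
    have h2 : (Real.sqrt n / 20) * (Real.sqrt n / 20) = (n : ℝ) / 400 := by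
      rw [div_mul_div_comm, hsq]
      norm_num
    nlinarith
  have hnbig : (10:ℝ)^9 ≤ (n:ℝ) := by exact_mod_cast hn
  have final : (B : ℝ) + (100 * ((K:ℝ) * (K:ℝ)) + 6) < n := by nlinarith
  have : ((B + (100 * (K * K) + 6) : ℕ) : ℝ) < (n : ℝ) := by push_cast; linarith
  exact_mod_cast this


end DetAux

/-- For all sufficiently large `n` and every `t ≤ n^{3/2}/200` there are 5-element subsets
`A 1, …, A t` of `Fin n` and distinct 2-element subsets `e 0 = {first two vertices},
e 1, …, e t` such that: `e i = A i ∩ A (i+1)` for `1 ≤ i ≤ t-1`; `|A i ∩ A j| ≤ 1` whenever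
`|i - j| ≥ 2`; the system has no external triangles; and every vertex lies in at most
`√n / 20` of the sets `A i`. -/
theorem exists_deterministic_system :
    ∃ N : ℕ, ∀ n : ℕ, N ≤ n → ∀ t : ℕ, (t : ℝ) ≤ (n : ℝ) ^ (3 / 2 : ℝ) / 200 →
      ∃ (A : ℕ → Finset (Fin n)) (e : ℕ → Finset (Fin n)),
        (∀ i, 1 ≤ i → i ≤ t → (A i).card = 5) ∧
        (∀ i, i ≤ t → (e i).card = 2) ∧
        (∀ i j, i ≤ t → j ≤ t → i ≠ j → e i ≠ e j) ∧
        (∀ x ∈ e 0, (x : ℕ) ≤ 1) ∧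
        (∀ i, 1 ≤ i → i + 1 ≤ t → e i = A i ∩ A (i + 1)) ∧
        (∀ i j, 1 ≤ i → j ≤ t → i + 2 ≤ j → (A i ∩ A j).card ≤ 1) ∧
        (¬ ∃ (u v w : Fin n) (i j l : ℕ), u ≠ v ∧ u ≠ w ∧ v ≠ w ∧
          1 ≤ i ∧ i < j ∧ j < l ∧ l ≤ t ∧
          u ∈ A i ∧ v ∈ A i ∧ u ∈ A j ∧ w ∈ A j ∧ v ∈ A l ∧ w ∈ A l) ∧
        (∀ u : Fin n,
          ((((Finset.Icc 1 t)).filter fun i => u ∈ A i).card : ℝ) ≤ Real.sqrt n / 20) := by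
  classical
  refine ⟨10 ^ 9, ?_⟩
  intro n hn t ht
  have hn2 : 2 ≤ n := le_trans (by norm_num) hn
  have hsqrt20 : (0 : ℝ) ≤ Real.sqrt n / 20 := by positivity
  set v0 : Fin n := ⟨0, by omega⟩ with hv0
  set v1 : Fin n := ⟨1, by omega⟩ with hv1
  have hv01 : v0 ≠ v1 := by
    simp only [hv0, hv1, Ne, Fin.ext_iff]
    omega
  by_cases ht0 : t = 0
  · subst ht0
    refine ⟨fun _ => ∅, fun _ => ({v0, v1} : Finset (Fin n)), ?_, ?_, ?_, ?_, ?_, ?_, ?_, ?_⟩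
    · intro i h1 h2; omega
    · intro i _; exact Finset.card_pair hv01
    · intro i j hi hj hij; omega
    · intro x hx
      simp only [Finset.mem_insert, Finset.mem_singleton] at hx
      rcases hx with h | h <;> subst h
      · simp [hv0]
      · simp [hv1]
    · intro i h1 h2; omega
    · intro i j h1 h2 h3; omega
    · rintro ⟨u, v, w, i, j, l, _, _, _, hi, hij, hjl, hl, _⟩; omega
    · intro u
      have : Finset.Icc 1 0 = (∅ : Finset ℕ) := rfl
      rw [this]
      simp only [Finset.filter_empty, Finset.card_empty, Nat.cast_zero]
      exact hsqrt20
  · have ht1 : 1 ≤ t := by omega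
    set K : ℕ := Nat.sqrt n / 20 with hKdef
    have hK450 : 450 ≤ K := DetAux.K_big hn
    have main : ∀ m, 1 ≤ m → (m ≤ t → ∃ A e, DetAux.Sys n K m A e) := by
      intro m hm
      induction m, hm using Nat.le_induction with
      | base =>
        intro _
        exact DetAux.base K hK450 (by omega)
      | succ m hm ih =>
        intro hmt
        obtain ⟨A, e, S⟩ := ih (by omega)
        exact DetAux.extend K m A e S hm hK450 (DetAux.arith hn ht (by omega))
    obtain ⟨A, e, S⟩ := main t ht1 le_rfl
    set e' : ℕ → Finset (Fin n) :=
      fun i => if i = 0 then ({v0, v1} : Finset (Fin n)) else e i with he'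
    have he'0 : e' 0 = ({v0, v1} : Finset (Fin n)) := by simp only [he', if_pos rfl]
    have he'pos : ∀ i, 1 ≤ i → e' i = e i := by
      intro i hi; simp only [he', if_neg (by omega : i ≠ 0)]
    refine ⟨A, e', ?_, ?_, ?_, ?_, ?_, ?_, ?_, ?_⟩
    · exact fun i h1 h2 => S.card5 i h1 h2
    · intro i hi
      by_cases h0 : i = 0
      · subst h0; rw [he'0]; exact Finset.card_pair hv01
      · rw [he'pos i (by omega)]; exact S.ecard i (by omega) hi
    · -- distinctness of the e's
      intro i j hi hj hij heq
      -- first: a positive-index e never contains v0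
      have hv0notin : ∀ k, 1 ≤ k → k ≤ t → v0 ∉ e k := by
        intro k h1 h2 hmem
        have := S.low k h1 h2 v0 (S.esub k h1 h2 hmem)
        simp only [hv0] at this
        omega
      by_cases hi0 : i = 0
      · subst hi0
        have hj1 : 1 ≤ j := by omega
        rw [he'0, he'pos j hj1] at heq
        exact hv0notin j hj1 hj (heq ▸ Finset.mem_insert_self v0 {v1})
      · by_cases hj0 : j = 0
        · subst hj0
          have hi1 : 1 ≤ i := by omega
          rw [he'0, he'pos i hi1] at heq
          exact hv0notin i hi1 hi (heq.symm ▸ Finset.mem_insert_self v0 {v1})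
        · have hi1 : 1 ≤ i := by omega
          have hj1 : 1 ≤ j := by omega
          rw [he'pos i hi1, he'pos j hj1] at heq
          rcases lt_or_gt_of_ne hij with hlt | hgt
          · -- i < j : e j = e i ⊆ A i, contradicting eonly
            have hsub : e j ⊆ A i := heq ▸ S.esub i hi1 hi
            exact S.eonly j hj1 hj i hi1 hi (by omega) (by omega) hsub
          · have hsub : e i ⊆ A j := heq ▸ S.esub j hj1 hj
            exact S.eonly i hi1 hi j hj1 hj (by omega) (by omega) hsub
    · intro x hx
      rw [he'0] at hx
      simp only [Finset.mem_insert, Finset.mem_singleton] at hx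
      rcases hx with h | h <;> subst h
      · simp [hv0]
      · simp [hv1]
    · intro i h1 h2
      rw [he'pos i h1]
      exact S.enext i h1 h2
    · exact fun i j h1 h2 h3 => S.far i j h1 h2 h3
    · exact S.tri
    · intro u
      have h1 := S.dle u
      unfold DetAux.deg at h1
      have h2 : (((Finset.Icc 1 t).filter fun i => u ∈ A i).card : ℝ) ≤ (K : ℝ) := by
        exact_mod_cast h1
      calc (((Finset.Icc 1 t).filter fun i => u ∈ A i).card : ℝ)
          ≤ (K : ℝ) := h2
        _ ≤ Real.sqrt n / 20 := DetAux.K_le hn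
end

section
/- Let 𝒜 = {A_1, …, A_t} be a family of 5-element subsets of [n] and e_1, …, e_{t−1} 2-element subsets with e_i = A_i ∩ A_{i+1} for 1 ≤ i ≤ t−1, |A_i ∩ A_j| ≤ 1 whenever |i − j| ≥ 2, and no distinct u, v, w ∈ [n] and indices 1 ≤ i < j < k ≤ t with {u,v} ⊆ A_i, {u,w} ⊆ A_j, {v,w} ⊆ A_k. Then for any three distinct vertices u, v, w ∈ [n], if each of the three pairs {u,v}, {u,w}, {v,w} is contained in some member of 𝒜, then there is a single member A_i ∈ 𝒜 containing all three pairs, i.e. with u, v, w ∈ A_i. -/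
/-- Let `𝒜 = {A 1, …, A t}` be a family of 5-element subsets of `Fin n` such that
consecutive sets meet in exactly two vertices (their shared pair `e i`), non-consecutive
sets meet in at most one vertex, and there are no external triangles.  Then for any three
distinct vertices `u, v, w`, if each of the pairs `{u,v}`, `{u,w}`, `{v,w}` is contained in
some member of `𝒜`, then some single member of `𝒜` contains all of `u, v, w`. -/
theorem covered_triangle_simply_covered {n : ℕ} (t : ℕ) (A : ℕ → Finset (Fin n))
    (hcard : ∀ i, 1 ≤ i → i ≤ t → (A i).card = 5)
    (hconsec : ∀ i, 1 ≤ i → i + 1 ≤ t → (A i ∩ A (i + 1)).card = 2)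
    (hfar : ∀ i j, 1 ≤ i → j ≤ t → i + 2 ≤ j → (A i ∩ A j).card ≤ 1)
    (hnotri : ¬ ∃ (u v w : Fin n) (i j l : ℕ), u ≠ v ∧ u ≠ w ∧ v ≠ w ∧
      1 ≤ i ∧ i < j ∧ j < l ∧ l ≤ t ∧
      u ∈ A i ∧ v ∈ A i ∧ u ∈ A j ∧ w ∈ A j ∧ v ∈ A l ∧ w ∈ A l)
    (u v w : Fin n) (huv : u ≠ v) (huw : u ≠ w) (hvw : v ≠ w)
    (h₁ : ∃ i, 1 ≤ i ∧ i ≤ t ∧ u ∈ A i ∧ v ∈ A i)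
    (h₂ : ∃ i, 1 ≤ i ∧ i ≤ t ∧ u ∈ A i ∧ w ∈ A i)
    (h₃ : ∃ i, 1 ≤ i ∧ i ≤ t ∧ v ∈ A i ∧ w ∈ A i) :
    ∃ i, 1 ≤ i ∧ i ≤ t ∧ u ∈ A i ∧ v ∈ A i ∧ w ∈ A i := by
  obtain ⟨i, hi1, hit, hui, hvi⟩ := h₁
  obtain ⟨j, hj1, hjt, huj, hwj⟩ := h₂
  obtain ⟨k, hk1, hkt, hvk, hwk⟩ := h₃
  by_cases hij : i = j
  · exact ⟨i, hi1, hit, hui, hvi, hij ▸ hwj⟩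
  by_cases hik : i = k
  · exact ⟨i, hi1, hit, hui, hvi, hik ▸ hwk⟩
  by_cases hjk : j = k
  · exact ⟨j, hj1, hjt, huj, hjk ▸ hvk, hwj⟩
  exfalso
  apply hnotri
  rcases lt_trichotomy i j with h1 | h1 | h1
  · rcases lt_trichotomy j k with h3 | h3 | h3
    · exact ⟨u, v, w, i, j, k, huv, huw, hvw, hi1, h1, h3, hkt,
        hui, hvi, huj, hwj, hvk, hwk⟩
    · exact absurd h3 hjk
    · rcases lt_trichotomy i k with h2 | h2 | h2
      · exact ⟨v, u, w, i, k, j, huv.symm, hvw, huw, hi1, h2, h3, hjt,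
          hvi, hui, hvk, hwk, huj, hwj⟩
      · exact absurd h2 hik
      · exact ⟨v, w, u, k, i, j, hvw, huv.symm, huw.symm, hk1, h2, h1, hjt,
          hvk, hwk, hvi, hui, hwj, huj⟩
  · exact absurd h1 hij
  · rcases lt_trichotomy i k with h2 | h2 | h2
    · exact ⟨u, w, v, j, i, k, huw, huv, hvw.symm, hj1, h1, h2, hkt,
        huj, hwj, hui, hvi, hwk, hvk⟩
    · exact absurd h2 hik
    · rcases lt_trichotomy j k with h3 | h3 | h3
      · exact ⟨w, u, v, j, k, i, huw.symm, hvw.symm, huv, hj1, h3, h2, hit,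
          hwj, huj, hwk, hvk, hui, hvi⟩
      · exact absurd h3 hjk
      · exact ⟨w, v, u, k, j, i, hvw.symm, huw.symm, huv.symm, hk1, h3, h1, hit,
          hwk, hvk, hwj, huj, hvi, hui⟩
end

section
/- Consider the K_5-bootstrap percolation process and suppose that at time t the graph G_t contains two 5-element vertex sets A_1 and A_2, each inducing a clique in G_t, with A_1 ∩ A_2 = {u, v} where uv is an edge, together with an edge wz of G_t for some w ∈ A_1 \ {u,v} and z ∈ A_2 \ {u,v}. Then the 8-element vertex set A_1 ∪ A_2 induces a complete graph K_8 in G_{t+2}. -/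
open Finset SimpleGraph

namespace bootStep

variable {V : Type*} {r : ℕ} {G : SimpleGraph V}

theorem le_self (r : ℕ) (G : SimpleGraph V) : G ≤ bootStep r G :=
  fun _ _ h => Or.inl h

variable [DecidableEq V]

theorem adj_of_isClique_insert {s : Finset V} {x y : V} (hs : #s = r) (hx : x ∉ s)
    (hy : y ∉ s) (hxy : x ≠ y) (hxs : G.IsClique (insert x s : Finset V))
    (hys : G.IsClique (insert y s : Finset V)) :
    (bootStep (r + 2) G).Adj x y := by
  refine Or.inr ⟨hxy, insert x (insert y s), ?_, by simp, by simp, ?_⟩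
  · rw [card_insert_of_notMem (by simp [hxy, hx]), card_insert_of_notMem hy, hs]
  · intro a ha b hb hab hnot
    simp only [mem_insert] at ha hb
    rcases ha with rfl | rfl | ha <;> rcases hb with rfl | rfl | hb
    · exact (hab rfl).elim
    · exact (hnot (.inl ⟨rfl, rfl⟩)).elim
    · exact hxs (mem_insert_self _ s) (mem_insert_of_mem hb) hab
    · exact (hnot (.inr ⟨rfl, rfl⟩)).elim
    · exact (hab rfl).elim
    · exact hys (mem_insert_self _ s) (mem_insert_of_mem hb) hab
    · exact hxs (mem_insert_of_mem ha) (mem_insert_self _ s) hab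
    · exact hys (mem_insert_of_mem ha) (mem_insert_self _ s) hab
    · exact hxs (mem_insert_of_mem ha) (mem_insert_of_mem hb) hab

theorem isClique_union {K₁ K₂ : Finset V} (h₁ : G.IsClique (K₁ : Set V))
    (h₂ : G.IsClique (K₂ : Set V)) (hr : r ≤ #(K₁ ∩ K₂)) :
    (bootStep (r + 2) G).IsClique (K₁ ∪ K₂ : Finset V) := by
  obtain ⟨s, hsK, hs⟩ := exists_subset_card_eq hr
  have cross : ∀ x ∈ K₁, ∀ y ∈ K₂, x ≠ y → (bootStep (r + 2) G).Adj x y := by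
    intro x hx₁ y hy₂ hxy
    by_cases hx₂ : x ∈ K₂
    · exact le_self _ _ (h₂ hx₂ hy₂ hxy)
    by_cases hy₁ : y ∈ K₁
    · exact le_self _ _ (h₁ hx₁ hy₁ hxy)
    have hs₁ : s ⊆ K₁ := hsK.trans inter_subset_left
    have hs₂ : s ⊆ K₂ := hsK.trans inter_subset_right
    refine adj_of_isClique_insert hs (fun h => hx₂ (hs₂ h)) (fun h => hy₁ (hs₁ h)) hxy ?_ ?_
    · exact h₁.subset (coe_subset.2 (insert_subset hx₁ hs₁))
    · exact h₂.subset (coe_subset.2 (insert_subset hy₂ hs₂))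
  intro x hx y hy hxy
  simp only [coe_union, Set.mem_union, mem_coe] at hx hy
  rcases hx with hx | hx <;> rcases hy with hy | hy
  · exact le_self _ _ (h₁ hx hy hxy)
  · exact cross x hx y hy hxy
  · exact (cross y hy x hx hxy.symm).symm
  · exact le_self _ _ (h₂ hx hy hxy)

theorem isClique_union_of_bridge {A₁ A₂ Q : Finset V} (h₁ : G.IsClique (A₁ : Set V))
    (h₂ : G.IsClique (A₂ : Set V)) (hQ : G.IsClique (Q : Set V)) (hr₁ : r ≤ #(A₁ ∩ Q))
    (hr₂ : r ≤ #(A₂ ∩ Q)) :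
    (bootStep (r + 2) (bootStep (r + 2) G)).IsClique (A₁ ∪ A₂ : Finset V) := by
  have hAQ₁ := isClique_union h₁ hQ hr₁
  have hAQ₂ := isClique_union h₂ hQ hr₂
  have hQ_le : r ≤ #((A₁ ∪ Q) ∩ (A₂ ∪ Q)) :=
    hr₁.trans (card_le_card (inter_subset_right.trans (subset_inter subset_union_right
      subset_union_right)))
  refine (isClique_union hAQ₁ hAQ₂ hQ_le).subset (coe_subset.2 ?_)
  exact union_subset_union subset_union_left subset_union_left

end bootStep

/-- In the `K_5`-bootstrap process, if `G_t` contains two 5-sets `A₁, A₂`, each inducing a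
clique, with `A₁ ∩ A₂ = {u, v}` an edge, together with an edge `wz` for some
`w ∈ A₁ \ {u,v}` and `z ∈ A₂ \ {u,v}`, then the 8-element set `A₁ ∪ A₂` induces a complete
graph `K₈` in `G_{t+2}`. -/
theorem two_cliques_fill {V : Type*} [DecidableEq V] (G : SimpleGraph V) (t : ℕ)
    (A₁ A₂ : Finset V) (h₁ : A₁.card = 5) (h₂ : A₂.card = 5)
    (u v w z : V) (huv : u ≠ v) (hint : A₁ ∩ A₂ = {u, v})
    (hc₁ : ((bootStep 5)^[t] G).IsClique (A₁ : Set V))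
    (hc₂ : ((bootStep 5)^[t] G).IsClique (A₂ : Set V))
    (hw : w ∈ A₁) (hwu : w ≠ u) (hwv : w ≠ v)
    (hz : z ∈ A₂) (hzu : z ≠ u) (hzv : z ≠ v)
    (hwz : ((bootStep 5)^[t] G).Adj w z) :
    (A₁ ∪ A₂).card = 8 ∧
      ((bootStep 5)^[t + 2] G).IsClique ((A₁ ∪ A₂ : Finset V) : Set V) := by
  have hu : u ∈ A₁ ∩ A₂ := hint ▸ by simp
  have hv : v ∈ A₁ ∩ A₂ := hint ▸ by simp
  rw [mem_inter] at hu hv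
  refine ⟨?_, ?_⟩
  · have := card_union_add_card_inter A₁ A₂
    rw [hint, card_pair huv] at this
    omega
  set Q : Finset V := {z, u, v, w}
  have hQ : ((bootStep 5)^[t] G).IsClique (Q : Set V) := by
    rw [coe_insert, isClique_insert]
    refine ⟨hc₁.subset (by simp [Set.insert_subset_iff, hu.1, hv.1, hw]), ?_⟩
    simp only [mem_coe, mem_insert, mem_singleton]
    rintro b (rfl | rfl | rfl) hzb
    · exact hc₂ hz hu.2 hzb
    · exact hc₂ hz hv.2 hzb
    · exact hwz.symm
  have huvw : #({u, v, w} : Finset V) = 3 :=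
    card_eq_three.2 ⟨u, v, w, huv, hwu.symm, hwv.symm, rfl⟩
  have huvz : #({u, v, z} : Finset V) = 3 :=
    card_eq_three.2 ⟨u, v, z, huv, hzu.symm, hzv.symm, rfl⟩
  rw [Function.iterate_succ_apply', Function.iterate_succ_apply']
  refine bootStep.isClique_union_of_bridge hc₁ hc₂ hQ (r := 3) ?_ ?_
  · exact huvw.ge.trans (card_le_card (by simp [subset_iff, Q, hu.1, hv.1, hw]))
  · exact huvz.ge.trans (card_le_card (by simp [subset_iff, Q, hu.2, hv.2, hz]))
end
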